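/- arXiv:1812.07560 — 8 statements merged into one kernel-verified Lean document; each statement's English description precedes it below -/
import Mathlib

section
/- Let n ≥ 1 and let α = (a_1,…,a_n) be rational numbers with each a_i ∈ (0,1), and let λ ∈ ℚ. Let M be the least common denominator of a_1,…,a_n and λ, and let p be a prime not dividing M. Let α' = (a_1',…,a_n') be the image of α under the Dwork dash operation. Then for every integer m ≥ 1 and all integers t ≥ s ≥ 1 one has F(α;λ)_{m·p^s−1} · F(α';λ^p)_{m·p^{t−1}−1} ≡ F(α';λ^p)_{m·p^{s−1}−1} · F(α;λ)_{m·p^t−1} (mod p^s). -/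
/-!
Work in `ℚ_p`. Writing `k = u + p v` with `u < p`, the coefficient `A_α(k) = ∏ (a_i)_k / k!^n`
factors as `A_{α'}(v) ρ(u, v)`: the terms of `a (a + 1) ⋯` divisible by `p` are
`p (a' + l)`, and they contribute `p^v (a')_v` (times one extra factor `p (a' + v)` when
`u > [-a]_0`). The ratio `ρ` is `p`-integral, and `ρ(u, v) ≡ ρ(u, w) (mod p^{e+1})` whenever
`v ≡ w (mod p^e)`, because the product of the terms prime to `p` over `p^{e+1}` consecutive
indices is, modulo `p^{e+1}`, the product of all units mod `p^{e+1}`, whatever the parameter.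

Splitting both truncated series by the last digit turns the difference in the theorem into
`Σ_u λ^u Σ_{v,w} A_{α'}(v) A_{α'}(w) λ^{p(v+w)} (ρ(u,v) - ρ(u,w))`. Dwork's lemma bounds such
double sums with an antisymmetric kernel by induction on the number of digits: splitting off the
last digits `c`, `e` of `v`, `w` gains a factor `p` in the kernel, and pairing `(c, e)` with
`(e, c)` keeps it antisymmetric.
-/

/-- The rising factorial (Pochhammer symbol) `(a)_k = a (a+1) ⋯ (a+k-1)`. -/
def risingFact (a : ℚ) (k : ℕ) : ℚ := ∏ i ∈ Finset.range k, (a + i)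

/-- The first `p`-adic digit `[r]_0` of a rational `r` (with denominator prime to `p`):
the unique integer in `[0, p-1]` congruent to `r` modulo `p`. -/
def firstDigit (p : ℕ) [Fact p.Prime] (r : ℚ) : ℕ := ((r : ZMod p)).val

/-- The Dwork dash operation `r' = (r + [-r]_0)/p`. -/
def dworkDash (p : ℕ) [Fact p.Prime] (r : ℚ) : ℚ := (r + (firstDigit p (-r) : ℚ)) / p

/-- Truncated hypergeometric series with upper parameters `a : Fin n → ℚ`, all lower
parameters equal to `1`, evaluated at `lam` and truncated at the `N`-th term:
`F(α;λ)_N = Σ_{k=0}^{N} ((a_1)_k ⋯ (a_n)_k / (k!)^n) λ^k`. -/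
def truncHG {n : ℕ} (a : Fin n → ℚ) (lam : ℚ) (N : ℕ) : ℚ :=
  ∑ k ∈ Finset.range (N + 1),
    (∏ i, risingFact (a i) k) / ((Nat.factorial k : ℚ)) ^ n * lam ^ k

open Finset
open scoped Nat

@[to_additive]
lemma Finset.prod_range_eq_prod_blocks {M : Type*} [CommMonoid M] (f : ℕ → M) (b n : ℕ) :
    ∏ i ∈ range (b * n), f i = ∏ l ∈ range n, ∏ r ∈ range b, f (b * l + r) := by
  induction n with
  | zero => simp
  | succ n ih => rw [Nat.mul_succ, prod_range_add, ih, prod_range_succ]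

lemma Finset.sum_sum_range_eq_diag_add_pairs {M : Type*} [AddCommMonoid M] (X : ℕ → ℕ → M)
    (n : ℕ) :
    ∑ c ∈ range n, ∑ e ∈ range n, X c e =
      ∑ c ∈ range n, (X c c + ∑ e ∈ range c, (X c e + X e c)) := by
  induction n with
  | zero => simp
  | succ n ih =>
    simp only [sum_range_succ, sum_add_distrib] at ih ⊢
    rw [ih]
    abel

lemma Finset.sum_mul_sum_sub_sum_mul_sum {R ι κ : Type*} [CommRing R] (s : Finset ι)
    (t : Finset κ) (f : ι → R) (g : κ → R) (ρ : ι → R) (σ : κ → R) :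
    (∑ v ∈ s, f v * ρ v) * ∑ w ∈ t, g w - (∑ v ∈ s, f v) * ∑ w ∈ t, g w * σ w =
      ∑ v ∈ s, ∑ w ∈ t, f v * g w * (ρ v - σ w) := by
  simp only [sum_mul_sum, ← sum_sub_distrib]
  exact sum_congr rfl fun _ _ => sum_congr rfl fun _ _ => by ring

section Ultrametric

variable {K ι : Type*} [NormedField K]

lemma norm_mul_le_of_norm_le_one_left {x y : K} {ε : ℝ} (hx : ‖x‖ ≤ 1) (hy : ‖y‖ ≤ ε) :
    ‖x * y‖ ≤ ε := by
  rw [norm_mul]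
  exact (mul_le_of_le_one_left (norm_nonneg y) hx).trans hy

lemma norm_pow_le_one {x : K} (hx : ‖x‖ ≤ 1) (k : ℕ) : ‖x ^ k‖ ≤ 1 := by
  rw [norm_pow]
  exact pow_le_one₀ (norm_nonneg _) hx

lemma norm_prod_le_one {s : Finset ι} {f : ι → K} (hf : ∀ i ∈ s, ‖f i‖ ≤ 1) :
    ‖∏ i ∈ s, f i‖ ≤ 1 := by
  rw [norm_prod]
  exact prod_le_one (fun _ _ => norm_nonneg _) hf

lemma norm_sub_le_of_norm_sub_le [IsUltrametricDist K] {x y z : K} {ε : ℝ} (hxy : ‖x - y‖ ≤ ε)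
    (hzy : ‖z - y‖ ≤ ε) : ‖x - z‖ ≤ ε := by
  rw [← sub_sub_sub_cancel_right x z y, sub_eq_add_neg]
  exact (IsUltrametricDist.norm_add_le_max _ _).trans (max_le hxy (by rwa [norm_neg]))

lemma norm_prod_sub_prod_le [IsUltrametricDist K] (s : Finset ι) {f g : ι → K} {ε : ℝ}
    (hε : 0 ≤ ε) (hf : ∀ i ∈ s, ‖f i‖ ≤ 1) (hg : ∀ i ∈ s, ‖g i‖ ≤ 1)
    (hfg : ∀ i ∈ s, ‖f i - g i‖ ≤ ε) : ‖∏ i ∈ s, f i - ∏ i ∈ s, g i‖ ≤ ε := by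
  classical
  induction s using Finset.induction_on with
  | empty => simpa using hε
  | insert a s ha ih =>
    simp only [forall_mem_insert] at hf hg hfg
    rw [prod_insert ha, prod_insert ha,
      show ∀ x y z w : K, x * y - z * w = (x - z) * y + z * (y - w) by intros; ring]
    exact (IsUltrametricDist.norm_add_le_max _ _).trans (max_le
      (by rw [mul_comm]; exact norm_mul_le_of_norm_le_one_left (norm_prod_le_one hf.2) hfg.1)
      (norm_mul_le_of_norm_le_one_left hg.1 (ih hf.2 hg.2 hfg.2)))

end Ultrametric

/-- `coeff s` stands for the coefficients `A_{α^(s)}(k)` of the `s`-th Dwork dash `α^(s)` of the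
parameters, and `ratio s u v` for `A_{α^(s)}(u + p v) / A_{α^(s+1)}(v)`. -/
structure DworkFamily (p : ℕ) [Fact p.Prime] where
  coeff : ℕ → ℕ → ℚ_[p]
  ratio : ℕ → ℕ → ℕ → ℚ_[p]
  coeff_zero (s : ℕ) : coeff s 0 = 1
  coeff_digit (s : ℕ) {u : ℕ} (hu : u < p) (v : ℕ) :
    coeff s (u + p * v) = coeff (s + 1) v * ratio s u v
  norm_ratio_le (s : ℕ) {u : ℕ} (hu : u < p) (v : ℕ) : ‖ratio s u v‖ ≤ 1
  norm_ratio_sub_le (s : ℕ) {u : ℕ} (hu : u < p) {e v w : ℕ} (hvw : v ≡ w [MOD p ^ e]) :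
    ‖ratio s u v - ratio s u w‖ ≤ (p : ℝ)⁻¹ ^ (e + 1)

structure IsDworkKernel (p : ℕ) [Fact p.Prime] (g : ℕ) (κ : ℕ → ℕ → ℚ_[p]) : Prop where
  antisymm (v w : ℕ) : κ w v = -κ v w
  norm_sub_le {e v v' : ℕ} (w : ℕ) (hv : v ≡ v' [MOD p ^ e]) :
    ‖κ v w - κ v' w‖ ≤ (p : ℝ)⁻¹ ^ (g + e)

lemma IsDworkKernel.norm_le {p : ℕ} [Fact p.Prime] {g : ℕ} {κ : ℕ → ℕ → ℚ_[p]}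
    (hκ : IsDworkKernel p g κ) (v w : ℕ) :
    ‖κ v w‖ ≤ (p : ℝ)⁻¹ ^ g := by
  have hww : κ w w = 0 := by linear_combination (hκ.antisymm w w) / 2
  simpa [hww] using hκ.norm_sub_le (e := 0) (v := v) (v' := w) w (by simp [Nat.modEq_one])

namespace DworkFamily

variable {p : ℕ} [Fact p.Prime] (F : DworkFamily p)

lemma norm_coeff_le (k : ℕ) : ∀ s, ‖F.coeff s k‖ ≤ 1 := by
  induction k using Nat.strong_induction_on with
  | _ k ih =>
    intro s
    rcases k.eq_zero_or_pos with rfl | hk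
    · simp [F.coeff_zero]
    rw [← Nat.mod_add_div k p, F.coeff_digit s (Nat.mod_lt _ (Fact.out : p.Prime).pos), norm_mul]
    exact mul_le_one₀ (ih _ (Nat.div_lt_self hk (Fact.out : p.Prime).one_lt) _) (norm_nonneg _)
      (F.norm_ratio_le s (Nat.mod_lt _ (Fact.out : p.Prime).pos) _)

noncomputable def kernelSum (s : ℕ) (μ : ℚ_[p]) (κ : ℕ → ℕ → ℚ_[p]) (A B : ℕ) : ℚ_[p] :=
  ∑ v ∈ range A, ∑ w ∈ range B, F.coeff s v * F.coeff s w * μ ^ (v + w) * κ v w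

noncomputable def liftKernel (s : ℕ) (κ : ℕ → ℕ → ℚ_[p]) (c e x y : ℕ) : ℚ_[p] :=
  F.ratio s c x * F.ratio s e y * κ (c + p * x) (e + p * y)

lemma kernelSum_add (s : ℕ) (μ : ℚ_[p]) (κ₁ κ₂ : ℕ → ℕ → ℚ_[p]) (A B : ℕ) :
    F.kernelSum s μ (fun v w => κ₁ v w + κ₂ v w) A B =
      F.kernelSum s μ κ₁ A B + F.kernelSum s μ κ₂ A B := by
  simp only [kernelSum, ← sum_add_distrib, mul_add]

lemma kernelSum_mul_prime (s : ℕ) (μ : ℚ_[p]) (κ : ℕ → ℕ → ℚ_[p]) (A B : ℕ) :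
    F.kernelSum s μ κ (A * p) (B * p) =
      ∑ c ∈ range p, ∑ e ∈ range p,
        μ ^ (c + e) * F.kernelSum (s + 1) (μ ^ p) (F.liftKernel s κ c e) A B := by
  simp only [kernelSum, mul_comm _ p, sum_range_eq_sum_blocks]
  rw [sum_comm]
  refine sum_congr rfl fun c hc => ?_
  simp_rw [mul_sum]
  symm
  rw [sum_comm]
  refine sum_congr rfl fun x _ => ?_
  rw [sum_comm]
  refine sum_congr rfl fun y _ => sum_congr rfl fun e he => ?_
  rw [add_comm (p * x), add_comm (p * y), F.coeff_digit s (mem_range.1 hc),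
    F.coeff_digit s (mem_range.1 he), liftKernel]
  ring

variable {F}

lemma norm_liftKernel_sub_le {s g : ℕ} {κ : ℕ → ℕ → ℚ_[p]} (hκ : IsDworkKernel p g κ)
    {c e : ℕ} (hc : c < p) (he : e < p) {f x x' : ℕ} (y : ℕ) (hx : x ≡ x' [MOD p ^ f]) :
    ‖F.liftKernel s κ c e x y - F.liftKernel s κ c e x' y‖ ≤ (p : ℝ)⁻¹ ^ (g + 1 + f) := by
  have hcx : c + p * x ≡ c + p * x' [MOD p ^ (f + 1)] := by
    rw [pow_succ']
    exact (hx.mul_left' p).add_left c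
  have hsplit : F.liftKernel s κ c e x y - F.liftKernel s κ c e x' y =
      (F.ratio s c x - F.ratio s c x') * (F.ratio s e y * κ (c + p * x) (e + p * y)) +
        F.ratio s c x' * F.ratio s e y *
          (κ (c + p * x) (e + p * y) - κ (c + p * x') (e + p * y)) := by
    simp only [liftKernel]
    ring
  rw [hsplit]
  refine (IsUltrametricDist.norm_add_le_max _ _).trans (max_le ?_ ?_)
  · calc _ ≤ (p : ℝ)⁻¹ ^ (f + 1) * (1 * (p : ℝ)⁻¹ ^ g) := by
          rw [norm_mul, norm_mul]
          gcongr
          exacts [F.norm_ratio_sub_le s hc hx, F.norm_ratio_le s he y, hκ.norm_le _ _]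
      _ = _ := by ring
  · calc _ ≤ 1 * 1 * (p : ℝ)⁻¹ ^ (g + (f + 1)) := by
          rw [norm_mul, norm_mul]
          gcongr
          exacts [F.norm_ratio_le s hc x', F.norm_ratio_le s he y, hκ.norm_sub_le _ hcx]
      _ = _ := by ring

lemma isDworkKernel_liftKernel_self {s g : ℕ} {κ : ℕ → ℕ → ℚ_[p]} (hκ : IsDworkKernel p g κ)
    {c : ℕ} (hc : c < p) : IsDworkKernel p (g + 1) (F.liftKernel s κ c c) where
  antisymm x y := by
    simp only [liftKernel]
    rw [hκ.antisymm (c + p * x)]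
    ring
  norm_sub_le y hx := norm_liftKernel_sub_le hκ hc hc y hx

lemma isDworkKernel_liftKernel_add {s g : ℕ} {κ : ℕ → ℕ → ℚ_[p]} (hκ : IsDworkKernel p g κ)
    {c e : ℕ} (hc : c < p) (he : e < p) :
    IsDworkKernel p (g + 1) fun x y => F.liftKernel s κ c e x y + F.liftKernel s κ e c x y where
  antisymm x y := by
    simp only [liftKernel]
    rw [hκ.antisymm (c + p * x), hκ.antisymm (e + p * x)]
    ring
  norm_sub_le y hx := by
    rw [add_sub_add_comm]
    exact (IsUltrametricDist.norm_add_le_max _ _).trans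
      (max_le (norm_liftKernel_sub_le hκ hc he y hx) (norm_liftKernel_sub_le hκ he hc y hx))

variable (F)

theorem norm_kernelSum_le (d : ℕ) : ∀ {s g : ℕ} {μ : ℚ_[p]} {κ : ℕ → ℕ → ℚ_[p]},
    ‖μ‖ ≤ 1 → IsDworkKernel p g κ → ∀ m M : ℕ,
      ‖F.kernelSum s μ κ (m * p ^ d) (M * p ^ d)‖ ≤ (p : ℝ)⁻¹ ^ (g + d) := by
  induction d with
  | zero =>
    intro s g μ κ hμ hκ m M
    refine IsUltrametricDist.norm_sum_le_of_forall_le_of_nonneg (by positivity) fun v _ => ?_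
    refine IsUltrametricDist.norm_sum_le_of_forall_le_of_nonneg (by positivity) fun w _ => ?_
    calc _ ≤ 1 * 1 * 1 * (p : ℝ)⁻¹ ^ g := by
          simp only [norm_mul]
          gcongr
          exacts [F.norm_coeff_le v s, F.norm_coeff_le w s, norm_pow_le_one hμ _, hκ.norm_le v w]
      _ = _ := by ring
  | succ d ih =>
    intro s g μ κ hμ hκ m M
    have hinner {κ' : ℕ → ℕ → ℚ_[p]} (hκ' : IsDworkKernel p (g + 1) κ') (c e : ℕ) :
        ‖μ ^ (c + e) * F.kernelSum (s + 1) (μ ^ p) κ' (m * p ^ d) (M * p ^ d)‖ ≤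
          (p : ℝ)⁻¹ ^ (g + (d + 1)) := by
      rw [← add_assoc, add_right_comm]
      exact norm_mul_le_of_norm_le_one_left (norm_pow_le_one hμ _)
        (ih (norm_pow_le_one hμ p) hκ' m M)
    rw [pow_succ, ← mul_assoc, ← mul_assoc, kernelSum_mul_prime, sum_sum_range_eq_diag_add_pairs]
    refine IsUltrametricDist.norm_sum_le_of_forall_le_of_nonneg (by positivity) fun c hc => ?_
    refine (IsUltrametricDist.norm_add_le_max _ _).trans (max_le ?_ ?_)
    · exact hinner (isDworkKernel_liftKernel_self hκ (mem_range.1 hc)) c c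
    refine IsUltrametricDist.norm_sum_le_of_forall_le_of_nonneg (by positivity) fun e he => ?_
    have he' : e < p := (mem_range.1 he).trans (mem_range.1 hc)
    -- Only the sum of the kernels for `(c, e)` and `(e, c)` is again antisymmetric.
    rw [add_comm e c, ← mul_add, ← kernelSum_add]
    exact hinner (isDworkKernel_liftKernel_add hκ (mem_range.1 hc) he') c e

noncomputable def partialSum (s : ℕ) (x : ℚ_[p]) (N : ℕ) : ℚ_[p] :=
  ∑ k ∈ range N, F.coeff s k * x ^ k

lemma partialSum_mul_prime (s : ℕ) (x : ℚ_[p]) (N : ℕ) :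
    F.partialSum s x (N * p) =
      ∑ u ∈ range p, x ^ u * ∑ v ∈ range N, F.coeff (s + 1) v * (x ^ p) ^ v * F.ratio s u v := by
  rw [partialSum, mul_comm, sum_range_eq_sum_blocks, sum_comm]
  refine sum_congr rfl fun u hu => ?_
  rw [mul_sum]
  refine sum_congr rfl fun v _ => ?_
  rw [add_comm, F.coeff_digit s (mem_range.1 hu)]
  ring

lemma isDworkKernel_ratio_sub (s : ℕ) {u : ℕ} (hu : u < p) :
    IsDworkKernel p 1 fun v w => F.ratio s u v - F.ratio s u w where
  antisymm v w := by ring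
  norm_sub_le w hv := by
    rw [sub_sub_sub_cancel_right, add_comm]
    exact F.norm_ratio_sub_le s hu hv

lemma partialSum_mul_sub_eq_kernelSum (x : ℚ_[p]) (u A B : ℕ) :
    (x ^ u * ∑ v ∈ range A, F.coeff 1 v * (x ^ p) ^ v * F.ratio 0 u v) *
          F.partialSum 1 (x ^ p) B -
        F.partialSum 1 (x ^ p) A *
          (x ^ u * ∑ w ∈ range B, F.coeff 1 w * (x ^ p) ^ w * F.ratio 0 u w) =
      x ^ u * F.kernelSum 1 (x ^ p) (fun v w => F.ratio 0 u v - F.ratio 0 u w) A B := by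
  rw [mul_assoc, mul_left_comm (F.partialSum 1 _ A), ← mul_sub, partialSum, partialSum,
    sum_mul_sum_sub_sum_mul_sum, kernelSum]
  congr 1
  exact sum_congr rfl fun v _ => sum_congr rfl fun w _ => by ring

theorem norm_partialSum_mul_sub_le {x : ℚ_[p]} (hx : ‖x‖ ≤ 1) (m : ℕ) {r r' : ℕ} (hr : r ≤ r') :
    ‖F.partialSum 0 x (m * p ^ (r + 1)) * F.partialSum 1 (x ^ p) (m * p ^ r') -
        F.partialSum 1 (x ^ p) (m * p ^ r) * F.partialSum 0 x (m * p ^ (r' + 1))‖ ≤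
      (p : ℝ)⁻¹ ^ (r + 1) := by
  obtain ⟨k, rfl⟩ := Nat.exists_eq_add_of_le hr
  rw [pow_succ, pow_succ, ← mul_assoc, ← mul_assoc, partialSum_mul_prime, partialSum_mul_prime,
    sum_mul, mul_sum, ← sum_sub_distrib]
  refine IsUltrametricDist.norm_sum_le_of_forall_le_of_nonneg (by positivity) fun u hu => ?_
  rw [partialSum_mul_sub_eq_kernelSum, show m * p ^ (r + k) = m * p ^ k * p ^ r by ring,
    add_comm r]
  exact norm_mul_le_of_norm_le_one_left (norm_pow_le_one hx u) (F.norm_kernelSum_le r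
    (norm_pow_le_one hx p) (F.isDworkKernel_ratio_sub 0 (mem_range.1 hu)) m (m * p ^ k))

end DworkFamily

lemma Nat.mod_eq_iff_dvd_add {p u₀ x₀ j : ℕ} (hu₀ : u₀ < p) (h : p ∣ x₀ + u₀) :
    j % p = u₀ ↔ p ∣ x₀ + j := by
  have hj : j % p = u₀ ↔ (j : ZMod p) = u₀ := by
    rw [ZMod.natCast_eq_natCast_iff', Nat.mod_eq_of_lt hu₀]
  rw [hj, ← ZMod.natCast_eq_zero_iff, Nat.cast_add]
  rw [← ZMod.natCast_eq_zero_iff, Nat.cast_add] at h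
  constructor
  · intro h'
    linear_combination h + h'
  · intro h'
    linear_combination h' - h

def natUnitFactor (p j : ℕ) : ℕ :=
  if p ∣ j then 1 else j

section PadicApproximation

variable {p : ℕ} [Fact p.Prime]

lemma inv_natCast_pow_lt_one {s : ℕ} (hs : s ≠ 0) : (p : ℝ)⁻¹ ^ s < 1 :=
  pow_lt_one₀ (by positivity)
    (inv_lt_one_of_one_lt₀ (by exact_mod_cast (Fact.out : p.Prime).one_lt)) hs

lemma Padic.norm_natCast_sub_le_of_modEq {a b s : ℕ} (h : a ≡ b [MOD p ^ s]) :
    ‖(a : ℚ_[p]) - b‖ ≤ (p : ℝ)⁻¹ ^ s := by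
  have hdvd : ((p : ℤ) ^ s) ∣ (a : ℤ) - b := by exact_mod_cast (Nat.modEq_iff_dvd.1 h.symm)
  have hnorm := (Padic.norm_int_le_pow_iff_dvd ((a : ℤ) - b) s).2 hdvd
  rw [zpow_neg, zpow_natCast, ← inv_pow] at hnorm
  exact_mod_cast hnorm

lemma Padic.exists_natCast_norm_sub_le {x : ℚ_[p]} (hx : ‖x‖ ≤ 1) (s : ℕ) :
    ∃ n : ℕ, ‖x - n‖ ≤ (p : ℝ)⁻¹ ^ s := by
  let y : ℤ_[p] := ⟨x, hx⟩
  refine ⟨y.appr s, ?_⟩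
  have hnorm := (PadicInt.norm_le_pow_iff_mem_span_pow _ s).2 (PadicInt.appr_spec s y)
  rw [PadicInt.norm_def, PadicInt.coe_sub, PadicInt.coe_natCast, zpow_neg, zpow_natCast,
    ← inv_pow] at hnorm
  exact hnorm

end PadicApproximation

section UnitParts

variable {p : ℕ} [Fact p.Prime]

-- When `x + u₀ ≡ 0 (mod p)`, the factors `x + i` divisible by `p` are those with `i ≡ u₀`.
noncomputable def unitFactor (x : ℚ_[p]) (u₀ i : ℕ) : ℚ_[p] :=
  if i % p = u₀ then 1 else x + i

lemma norm_unitFactor {x : ℚ_[p]} {u₀ : ℕ} (hu₀ : u₀ < p) (hxu : ‖x + u₀‖ < 1) (i : ℕ) :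
    ‖unitFactor x u₀ i‖ = 1 := by
  unfold unitFactor
  split_ifs with h
  · exact norm_one
  have hi : ‖(((i : ℤ) - u₀ : ℤ) : ℚ_[p])‖ = 1 := by
    refine le_antisymm (Padic.norm_int_le_one _) (not_lt.1 fun hlt => h ?_)
    have hmod : u₀ ≡ i [MOD p] := Nat.modEq_iff_dvd.2 (Padic.norm_intCast_lt_one_iff.1 hlt)
    rw [Nat.ModEq, Nat.mod_eq_of_lt hu₀] at hmod
    exact hmod.symm
  rw [show x + i = (x + u₀) + (((i : ℤ) - u₀ : ℤ) : ℚ_[p]) by push_cast; ring,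
    IsUltrametricDist.norm_add_eq_max_of_norm_ne_norm (by rw [hi]; exact hxu.ne), hi,
    max_eq_right hxu.le]

lemma norm_prod_unitFactor {x : ℚ_[p]} {u₀ : ℕ} (hu₀ : u₀ < p) (hxu : ‖x + u₀‖ < 1)
    (s : Finset ℕ) (f : ℕ → ℕ) : ‖∏ i ∈ s, unitFactor x u₀ (f i)‖ = 1 := by
  rw [norm_prod]
  exact prod_eq_one fun i _ => norm_unitFactor hu₀ hxu _

lemma prod_natUnitFactor_add_modEq {s L : ℕ} (hL : p ^ s ∣ L) (M : ℕ) :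
    ∏ i ∈ range L, natUnitFactor p (M + i) ≡ ∏ i ∈ range L, natUnitFactor p i [MOD p ^ s] := by
  induction M with
  | zero => simpa using Nat.ModEq.refl _
  | succ M ih =>
    refine Nat.ModEq.trans ?_ ih
    -- Sliding the window by one trades the factor at `M`, prime to `p`, for a congruent one.
    have hshift : (∏ i ∈ range L, natUnitFactor p (M + 1 + i)) * natUnitFactor p M =
        (∏ i ∈ range L, natUnitFactor p (M + i)) * natUnitFactor p (M + L) := by
      rw [← prod_range_succ (fun i => natUnitFactor p (M + i)), prod_range_succ']
      simp only [add_zero, add_assoc, add_comm 1]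
    have hperiod : natUnitFactor p (M + L) ≡ natUnitFactor p M [MOD p ^ s] := by
      rcases Nat.eq_zero_or_pos s with rfl | hs
      · exact Nat.modEq_one
      have hpL : p ∣ L := (dvd_pow_self p hs.ne').trans hL
      unfold natUnitFactor
      simp only [Nat.dvd_add_left hpL]
      split_ifs
      · rfl
      · simpa using (Nat.modEq_zero_iff_dvd.2 hL).add_left M
    have hcop : Nat.gcd (p ^ s) (natUnitFactor p M) = 1 := by
      refine Nat.Coprime.pow_left s ?_
      unfold natUnitFactor
      split_ifs with hM
      · exact Nat.coprime_one_right p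
      · exact ((Fact.out : p.Prime).coprime_iff_not_dvd).2 hM
    exact Nat.ModEq.cancel_right_of_coprime hcop (hshift ▸ hperiod.mul_left _)

lemma norm_prod_unitFactor_sub_prod_natUnitFactor_le {x : ℚ_[p]} {u₀ s L : ℕ} (hu₀ : u₀ < p)
    (hx : ‖x‖ ≤ 1) (hxu : ‖x + u₀‖ < 1) (hs : s ≠ 0) (hL : p ^ s ∣ L) (N : ℕ) :
    ‖∏ i ∈ range L, unitFactor x u₀ (N + i) - ∏ i ∈ range L, (natUnitFactor p i : ℚ_[p])‖ ≤
      (p : ℝ)⁻¹ ^ s := by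
  -- With an integer `x₀ ≡ x (mod p^s)` the window becomes `∏ natUnitFactor p (x₀ + N + i)`.
  obtain ⟨x₀, hx₀⟩ := Padic.exists_natCast_norm_sub_le hx s
  have hdvd : p ∣ x₀ + u₀ := by
    rw [← Padic.norm_natCast_lt_one_iff, Nat.cast_add,
      show (x₀ : ℚ_[p]) + u₀ = (x + u₀) + -(x - x₀) by ring]
    exact (IsUltrametricDist.norm_add_le_max _ _).trans_lt
      (max_lt hxu (by rw [norm_neg]; exact hx₀.trans_lt (inv_natCast_pow_lt_one hs)))
  have hfactor (j : ℕ) : ‖unitFactor x u₀ j - natUnitFactor p (x₀ + j)‖ ≤ (p : ℝ)⁻¹ ^ s := by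
    unfold unitFactor natUnitFactor
    by_cases hj : j % p = u₀
    · rw [if_pos hj, if_pos ((Nat.mod_eq_iff_dvd_add hu₀ hdvd).1 hj)]
      simp
    · rw [if_neg hj, if_neg (mt (Nat.mod_eq_iff_dvd_add hu₀ hdvd).2 hj)]
      push_cast
      rwa [add_sub_add_right_eq_sub]
  have hperiod := Padic.norm_natCast_sub_le_of_modEq (prod_natUnitFactor_add_modEq hL (x₀ + N))
  push_cast at hperiod
  refine norm_sub_le_of_norm_sub_le (y := ∏ i ∈ range L, (natUnitFactor p (x₀ + N + i) : ℚ_[p]))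
    ?_ (by rwa [norm_sub_rev])
  refine norm_prod_sub_prod_le _ (by positivity) (fun i _ => (norm_unitFactor hu₀ hxu _).le)
    (fun i _ => IsUltrametricDist.norm_natCast_le_one _ _) fun i _ => ?_
  simpa [add_assoc] using hfactor (N + i)

end UnitParts

section Pochhammer

variable {p : ℕ} [Fact p.Prime]

lemma prod_add_natCast_block {x x' : ℚ_[p]} {u₀ : ℕ} (hx' : (p : ℚ_[p]) * x' = x + u₀) (l : ℕ)
    {n : ℕ} (hn : n ≤ p) :
    ∏ r ∈ range n, (x + ((p * l + r : ℕ) : ℚ_[p])) =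
      (if u₀ < n then (p : ℚ_[p]) * (x' + l) else 1) *
        ∏ r ∈ range n, unitFactor x u₀ (p * l + r) := by
  induction n with
  | zero => simp
  | succ n ih =>
    have hmod : (p * l + n) % p = n := by rw [Nat.mul_add_mod, Nat.mod_eq_of_lt hn]
    rw [prod_range_succ, prod_range_succ, ih (by omega), unitFactor, hmod]
    rcases lt_trichotomy n u₀ with h | rfl | h
    · rw [if_neg (by omega), if_neg (by omega), if_neg h.ne]
      ring
    · have hdigit : x + ((p * l + n : ℕ) : ℚ_[p]) = p * (x' + l) := by
        push_cast
        linear_combination -hx'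
      rw [if_neg (lt_irrefl n), if_pos (Nat.lt_succ_self n), if_pos rfl, hdigit]
      ring
    · rw [if_pos h, if_pos (by omega), if_neg h.ne']
      ring

lemma prod_add_natCast_eq_digits {x x' : ℚ_[p]} {u₀ : ℕ} (hx' : (p : ℚ_[p]) * x' = x + u₀)
    (hu₀ : u₀ < p) {u : ℕ} (hu : u < p) (v : ℕ) :
    ∏ i ∈ range (u + p * v), (x + i) =
      p ^ v * (∏ l ∈ range v, (x' + l)) *
        ((if u₀ < u then (p : ℚ_[p]) * (x' + v) else 1) *
          ∏ i ∈ range (u + p * v), unitFactor x u₀ i) := by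
  have hsplit (f : ℕ → ℚ_[p]) : ∏ i ∈ range (u + p * v), f i =
      (∏ l ∈ range v, ∏ r ∈ range p, f (p * l + r)) * ∏ r ∈ range u, f (p * v + r) := by
    rw [add_comm, prod_range_add, prod_range_eq_prod_blocks]
  rw [hsplit (fun i => x + i), hsplit (unitFactor x u₀),
    prod_congr rfl fun l _ => prod_add_natCast_block hx' l le_rfl,
    prod_add_natCast_block hx' v hu.le]
  simp only [if_pos hu₀, prod_mul_distrib, prod_const, card_range]
  ring

end Pochhammer

section DworkDash

variable {p : ℕ} [Fact p.Prime]

lemma firstDigit_lt (r : ℚ) : firstDigit p r < p := ZMod.val_lt _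

lemma natCast_mul_dworkDash (a : ℚ) :
    (p : ℚ_[p]) * (dworkDash p a : ℚ_[p]) = a + firstDigit p (-a) := by
  have hp : (p : ℚ) ≠ 0 := by exact_mod_cast (Fact.out : p.Prime).ne_zero
  have h : (p : ℚ) * dworkDash p a = a + firstDigit p (-a) := by
    rw [dworkDash]
    field_simp
  exact_mod_cast congrArg (fun q : ℚ => (q : ℚ_[p])) h

lemma norm_add_firstDigit_neg_le {a : ℚ} (ha : ‖(a : ℚ_[p])‖ ≤ 1) :
    ‖(a : ℚ_[p]) + firstDigit p (-a)‖ ≤ (p : ℝ)⁻¹ := by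
  have hden : ¬ p ∣ a.den :=
    ((Padic.norm_rat_le_one_iff_padicValuation_le_one p).trans Rat.padicValuation_le_one_iff).1 ha
  have hdenZ : ((a.den : ℕ) : ZMod p) ≠ 0 := by rwa [Ne, ZMod.natCast_eq_zero_iff]
  have hnum : (p : ℤ) ∣ a.num + firstDigit p (-a) * a.den := by
    rw [← ZMod.intCast_zmod_eq_zero_iff_dvd]
    have hdigit : (firstDigit p (-a) : ZMod p) = -(a : ZMod p) := by
      rw [firstDigit, ZMod.natCast_zmod_val, Rat.cast_neg]
    have hcast : (a : ZMod p) * a.den = a.num := by rw [Rat.cast_def, div_mul_cancel₀ _ hdenZ]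
    push_cast
    rw [hdigit, neg_mul, hcast, add_neg_cancel]
  have hsplit : (a : ℚ_[p]) + firstDigit p (-a) =
      ((a.num + firstDigit p (-a) * a.den : ℤ) : ℚ_[p]) / a.den := by
    have hden' : (a.den : ℚ_[p]) ≠ 0 := by exact_mod_cast a.den_nz
    rw [Rat.cast_def]
    push_cast
    field_simp
  rw [hsplit, norm_div, Padic.norm_natCast_eq_one_iff.2
    (((Fact.out : p.Prime).coprime_iff_not_dvd).2 hden), div_one]
  have hnorm := (Padic.norm_int_le_pow_iff_dvd (a.num + firstDigit p (-a) * a.den) 1).2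
    (by rwa [pow_one])
  rwa [zpow_neg, Nat.cast_one, zpow_one] at hnorm

lemma norm_add_firstDigit_neg_lt_one {a : ℚ} (ha : ‖(a : ℚ_[p])‖ ≤ 1) :
    ‖(a : ℚ_[p]) + firstDigit p (-a)‖ < 1 :=
  (norm_add_firstDigit_neg_le ha).trans_lt
    (by simpa using inv_natCast_pow_lt_one (p := p) one_ne_zero)

lemma norm_dworkDash_le {a : ℚ} (ha : ‖(a : ℚ_[p])‖ ≤ 1) : ‖(dworkDash p a : ℚ_[p])‖ ≤ 1 := by
  have h := norm_add_firstDigit_neg_le ha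
  rw [← natCast_mul_dworkDash, norm_mul, Padic.norm_p] at h
  exact le_of_mul_le_mul_left (by rwa [mul_one])
    (inv_pos.2 (by exact_mod_cast (Fact.out : p.Prime).pos))

lemma norm_iterate_dworkDash_le {a : ℚ} (ha : ‖(a : ℚ_[p])‖ ≤ 1) (s : ℕ) :
    ‖(((dworkDash p)^[s] a : ℚ) : ℚ_[p])‖ ≤ 1 := by
  induction s with
  | zero => exact ha
  | succ s ih =>
    rw [Function.iterate_succ_apply']
    exact norm_dworkDash_le ih

end DworkDash

section HypergeometricFamily

noncomputable def carryFactor (p : ℕ) [Fact p.Prime] (a : ℚ) (u v : ℕ) : ℚ_[p] :=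
  if firstDigit p (-a) < u then (p : ℚ_[p]) * ((dworkDash p a : ℚ_[p]) + v) else 1

noncomputable def digitRatio (p : ℕ) [Fact p.Prime] (a : ℚ) (u v : ℕ) : ℚ_[p] :=
  carryFactor p a u v * (∏ i ∈ range (u + p * v), unitFactor (a : ℚ_[p]) (firstDigit p (-a)) i) /
    ∏ i ∈ range (u + p * v), unitFactor (1 : ℚ_[p]) (p - 1) i

variable {p : ℕ} [Fact p.Prime]

lemma one_add_natCast_pred : (1 : ℚ_[p]) + ((p - 1 : ℕ) : ℚ_[p]) = p := by
  rw [Nat.cast_sub (Fact.out : p.Prime).one_le]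
  ring

lemma norm_one_add_natCast_pred_lt_one : ‖(1 : ℚ_[p]) + ((p - 1 : ℕ) : ℚ_[p])‖ < 1 := by
  rw [one_add_natCast_pred, Padic.norm_p]
  exact inv_lt_one_of_one_lt₀ (by exact_mod_cast (Fact.out : p.Prime).one_lt)

lemma coe_risingFact_div_factorial_digit (a : ℚ) {u : ℕ} (hu : u < p) (v : ℕ) :
    ((risingFact a (u + p * v) / (u + p * v)! : ℚ) : ℚ_[p]) =
      ((risingFact (dworkDash p a) v / v ! : ℚ) : ℚ_[p]) * digitRatio p a u v := by
  have hrising (b : ℚ) (k : ℕ) :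
      ((risingFact b k : ℚ) : ℚ_[p]) = ∏ i ∈ range k, ((b : ℚ_[p]) + i) := by
    simp [risingFact]
  have hfactorial (k : ℕ) : ((k ! : ℕ) : ℚ_[p]) = ∏ i ∈ range k, ((1 : ℚ_[p]) + i) := by
    rw [← prod_range_add_one_eq_factorial]
    push_cast
    simp only [add_comm]
  have hp : (p : ℚ_[p]) ≠ 0 := by exact_mod_cast (Fact.out : p.Prime).ne_zero
  have hv : ((v ! : ℕ) : ℚ_[p]) ≠ 0 := by exact_mod_cast v.factorial_ne_zero
  have hunit : ∏ i ∈ range (u + p * v), unitFactor (1 : ℚ_[p]) (p - 1) i ≠ 0 := by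
    rw [← norm_ne_zero_iff, norm_prod_unitFactor (by omega) norm_one_add_natCast_pred_lt_one]
    exact one_ne_zero
  push_cast
  rw [hrising, hrising, hfactorial,
    prod_add_natCast_eq_digits (natCast_mul_dworkDash a) (firstDigit_lt _) hu v,
    prod_add_natCast_eq_digits (x' := 1) (by rw [mul_one, one_add_natCast_pred]) (by omega) hu v,
    if_neg (show ¬p - 1 < u by omega), ← hfactorial, digitRatio, carryFactor]
  field_simp

lemma norm_carryFactor_le {a : ℚ} (ha : ‖(a : ℚ_[p])‖ ≤ 1) (u v : ℕ) :
    ‖carryFactor p a u v‖ ≤ 1 := by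
  unfold carryFactor
  split_ifs
  · rw [norm_mul, Padic.norm_p]
    exact mul_le_one₀ (inv_le_one_of_one_le₀ (by exact_mod_cast (Fact.out : p.Prime).one_le))
      (norm_nonneg _) ((IsUltrametricDist.norm_add_le_max _ _).trans
        (max_le (norm_dworkDash_le ha) (IsUltrametricDist.norm_natCast_le_one _ _)))
  · exact norm_one.le

lemma norm_carryFactor_sub_le (a : ℚ) (u : ℕ) {e v w : ℕ} (h : v ≡ w [MOD p ^ e]) :
    ‖carryFactor p a u v - carryFactor p a u w‖ ≤ (p : ℝ)⁻¹ ^ (e + 1) := by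
  unfold carryFactor
  split_ifs
  · rw [← mul_sub, add_sub_add_left_eq_sub, norm_mul, Padic.norm_p, pow_succ']
    exact mul_le_mul_of_nonneg_left (Padic.norm_natCast_sub_le_of_modEq h) (by positivity)
  · simp

lemma norm_digitRatio_le {a : ℚ} (ha : ‖(a : ℚ_[p])‖ ≤ 1) (u v : ℕ) :
    ‖digitRatio p a u v‖ ≤ 1 := by
  rw [digitRatio, norm_div, norm_mul,
    norm_prod_unitFactor (firstDigit_lt _) (norm_add_firstDigit_neg_lt_one ha) _ fun i => i,
    norm_prod_unitFactor (Nat.sub_one_lt (Fact.out : p.Prime).ne_zero)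
      norm_one_add_natCast_pred_lt_one _ fun i => i, mul_one, div_one]
  exact norm_carryFactor_le ha u v

lemma norm_prod_unitFactor_sub_prod_unitFactor_one_le {a : ℚ} (ha : ‖(a : ℚ_[p])‖ ≤ 1)
    {s L : ℕ} (hs : s ≠ 0) (hL : p ^ s ∣ L) (k : ℕ) :
    ‖∏ i ∈ range L, unitFactor (a : ℚ_[p]) (firstDigit p (-a)) (k + i) -
        ∏ i ∈ range L, unitFactor (1 : ℚ_[p]) (p - 1) (k + i)‖ ≤ (p : ℝ)⁻¹ ^ s :=
  norm_sub_le_of_norm_sub_le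
    (norm_prod_unitFactor_sub_prod_natUnitFactor_le (firstDigit_lt _) ha
      (norm_add_firstDigit_neg_lt_one ha) hs hL k)
    (norm_prod_unitFactor_sub_prod_natUnitFactor_le (Nat.sub_one_lt (Fact.out : p.Prime).ne_zero)
      norm_one.le norm_one_add_natCast_pred_lt_one hs hL k)

lemma norm_digitRatio_sub_le {a : ℚ} (ha : ‖(a : ℚ_[p])‖ ≤ 1) (u : ℕ) {e v w : ℕ}
    (h : v ≡ w [MOD p ^ e]) :
    ‖digitRatio p a u v - digitRatio p a u w‖ ≤ (p : ℝ)⁻¹ ^ (e + 1) := by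
  wlog hwv : w ≤ v generalizing v w
  · rw [norm_sub_rev]
    exact this h.symm (le_of_not_ge hwv)
  have hp1 : p - 1 < p := Nat.sub_one_lt (Fact.out : p.Prime).ne_zero
  have hL : p ^ (e + 1) ∣ p * (v - w) := by
    rw [pow_succ']
    exact mul_dvd_mul_left p ((Nat.modEq_iff_dvd' hwv).1 h.symm)
  have hk : u + p * v = (u + p * w) + p * (v - w) := by
    rw [add_assoc, ← mul_add, Nat.add_sub_cancel' hwv]
  set k := u + p * w
  set L := p * (v - w)
  set Ua := ∏ i ∈ range k, unitFactor (a : ℚ_[p]) (firstDigit p (-a)) i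
  set U1 := ∏ i ∈ range k, unitFactor (1 : ℚ_[p]) (p - 1) i
  set Ta := ∏ i ∈ range L, unitFactor (a : ℚ_[p]) (firstDigit p (-a)) (k + i)
  set T1 := ∏ i ∈ range L, unitFactor (1 : ℚ_[p]) (p - 1) (k + i)
  have hU1 : ‖U1‖ = 1 := norm_prod_unitFactor hp1 norm_one_add_natCast_pred_lt_one _ _
  have hT1 : ‖T1‖ = 1 := norm_prod_unitFactor hp1 norm_one_add_natCast_pred_lt_one _ _
  have hwindow : ‖Ta - T1‖ ≤ (p : ℝ)⁻¹ ^ (e + 1) :=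
    norm_prod_unitFactor_sub_prod_unitFactor_one_le ha (Nat.succ_ne_zero e) hL k
  have hdiff : digitRatio p a u v - digitRatio p a u w =
      Ua / U1 * ((carryFactor p a u v * (Ta - T1) +
        (carryFactor p a u v - carryFactor p a u w) * T1) / T1) := by
    have hU1' : U1 ≠ 0 := norm_ne_zero_iff.1 (by rw [hU1]; exact one_ne_zero)
    have hT1' : T1 ≠ 0 := norm_ne_zero_iff.1 (by rw [hT1]; exact one_ne_zero)
    have hv : digitRatio p a u v = carryFactor p a u v * (Ua * Ta) / (U1 * T1) := by
      rw [digitRatio, hk, prod_range_add _ k L, prod_range_add _ k L]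
    have hw : digitRatio p a u w = carryFactor p a u w * Ua / U1 := rfl
    rw [hv, hw]
    field_simp
    ring
  rw [hdiff, norm_mul, norm_div, norm_div, hU1, hT1, norm_prod_unitFactor (firstDigit_lt _)
    (norm_add_firstDigit_neg_lt_one ha) _ fun i => i, div_one, div_one, one_mul]
  refine (IsUltrametricDist.norm_add_le_max _ _).trans (max_le
    (norm_mul_le_of_norm_le_one_left (norm_carryFactor_le ha u v) hwindow) ?_)
  rw [norm_mul, hT1, mul_one]
  exact norm_carryFactor_sub_le a u h

end HypergeometricFamily

namespace DworkFamily

variable {p : ℕ} [Fact p.Prime]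

noncomputable def ofParam (a : ℚ) (ha : ‖(a : ℚ_[p])‖ ≤ 1) : DworkFamily p where
  coeff s k := ((risingFact ((dworkDash p)^[s] a) k / k ! : ℚ) : ℚ_[p])
  ratio s := digitRatio p ((dworkDash p)^[s] a)
  coeff_zero s := by simp [risingFact]
  coeff_digit s u hu v := by
    rw [Function.iterate_succ_apply']
    exact coe_risingFact_div_factorial_digit _ hu v
  norm_ratio_le s u _ v := norm_digitRatio_le (norm_iterate_dworkDash_le ha s) u v
  norm_ratio_sub_le s u _ _ _ _ h := norm_digitRatio_sub_le (norm_iterate_dworkDash_le ha s) u h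

noncomputable def prod {ι : Type*} [Fintype ι] (F : ι → DworkFamily p) : DworkFamily p where
  coeff s k := ∏ i, (F i).coeff s k
  ratio s u v := ∏ i, (F i).ratio s u v
  coeff_zero s := by simp [coeff_zero]
  coeff_digit s u hu v := by simp only [coeff_digit _ s hu, prod_mul_distrib]
  norm_ratio_le s u hu v := norm_prod_le_one fun i _ => (F i).norm_ratio_le s hu v
  norm_ratio_sub_le s u hu e v w h := norm_prod_sub_prod_le _ (by positivity)
    (fun i _ => (F i).norm_ratio_le s hu v) (fun i _ => (F i).norm_ratio_le s hu w)
    fun i _ => (F i).norm_ratio_sub_le s hu h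

lemma coe_truncHG_iterate {n : ℕ} (a : Fin n → ℚ) (ha : ∀ i, ‖(a i : ℚ_[p])‖ ≤ 1) (s : ℕ)
    (x : ℚ) (N : ℕ) :
    ((truncHG (fun i => (dworkDash p)^[s] (a i)) x N : ℚ) : ℚ_[p]) =
      (DworkFamily.prod fun i => ofParam (a i) (ha i)).partialSum s x (N + 1) := by
  simp only [truncHG, partialSum, DworkFamily.prod, ofParam]
  push_cast
  refine sum_congr rfl fun k _ => ?_
  rw [prod_div_distrib, prod_const, card_univ, Fintype.card_fin]

end DworkFamily

theorem dwork_congruence_general (n : ℕ) (a : Fin n → ℚ) (lam : ℚ) (p : ℕ) [hp : Fact p.Prime]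
    (hM : ¬ p ∣ Nat.lcm (Finset.univ.lcm fun i => (a i).den) lam.den)
    (m s t : ℕ) (hm : 1 ≤ m) (hs : 1 ≤ s) (hst : s ≤ t) :
    padicNorm p
      (truncHG a lam (m * p ^ s - 1) *
          truncHG (fun i => dworkDash p (a i)) (lam ^ p) (m * p ^ (t - 1) - 1) -
        truncHG (fun i => dworkDash p (a i)) (lam ^ p) (m * p ^ (s - 1) - 1) *
          truncHG a lam (m * p ^ t - 1)) ≤ (p : ℚ) ^ (-(s : ℤ)) := by
  have ha (i : Fin n) : ‖(a i : ℚ_[p])‖ ≤ 1 := Padic.norm_rat_le_one fun h =>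
    hM (h.trans ((Finset.dvd_lcm (mem_univ i)).trans (Nat.dvd_lcm_left _ _)))
  have hlam : ‖(lam : ℚ_[p])‖ ≤ 1 :=
    Padic.norm_rat_le_one fun h => hM (h.trans (Nat.dvd_lcm_right _ _))
  set F := DworkFamily.prod fun i => DworkFamily.ofParam (a i) (ha i)
  have hF (r k : ℕ) (x : ℚ) :
      ((truncHG (fun i => (dworkDash p)^[r] (a i)) x (m * p ^ k - 1) : ℚ) : ℚ_[p]) =
        F.partialSum r x (m * p ^ k) := by
    rw [DworkFamily.coe_truncHG_iterate,
      Nat.sub_add_cancel (Nat.mul_pos hm (pow_pos hp.out.pos k))]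
  have hF0 := hF 0
  have hF1 := hF 1
  simp only [Function.iterate_zero, id, Function.iterate_one] at hF0 hF1
  obtain ⟨r, rfl⟩ := Nat.exists_eq_add_of_le' hs
  obtain ⟨r', rfl⟩ := Nat.exists_eq_add_of_le' (hs.trans hst)
  have key := F.norm_partialSum_mul_sub_le hlam m (Nat.le_of_succ_le_succ hst)
  rw [Nat.add_sub_cancel, Nat.add_sub_cancel, zpow_neg, zpow_natCast, ← inv_pow,
    ← Rat.cast_le (K := ℝ), ← Padic.eq_padicNorm]
  push_cast
  rwa [hF0, hF0, hF1, hF1, Rat.cast_pow]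

/-- Dwork's congruence: for `α` with entries in `(0,1)`, `p` a prime not dividing the least
common denominator `M` of the `a_i` and `λ`, `m ≥ 1` and `t ≥ s ≥ 1`,
`F(α;λ)_{m p^s - 1} F(α';λ^p)_{m p^{t-1} - 1} ≡ F(α';λ^p)_{m p^{s-1} - 1} F(α;λ)_{m p^t - 1}
(mod p^s)`. -/
theorem dwork_congruence (n : ℕ) (hn : 1 ≤ n) (a : Fin n → ℚ)
    (ha : ∀ i, 0 < a i ∧ a i < 1) (lam : ℚ) (p : ℕ) [hp : Fact p.Prime]
    (hM : ¬ p ∣ Nat.lcm (Finset.univ.lcm fun i => (a i).den) lam.den)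
    (m s t : ℕ) (hm : 1 ≤ m) (hs : 1 ≤ s) (hst : s ≤ t) :
    padicNorm p
      (truncHG a lam (m * p ^ s - 1) *
          truncHG (fun i => dworkDash p (a i)) (lam ^ p) (m * p ^ (t - 1) - 1) -
        truncHG (fun i => dworkDash p (a i)) (lam ^ p) (m * p ^ (s - 1) - 1) *
          truncHG a lam (m * p ^ t - 1)) ≤ (p : ℚ) ^ (-(s : ℤ)) :=
  dwork_congruence_general n a lam p (hp := hp) hM m s t hm hs hst
end

section
/- Let α = {a_1,…,a_n} be a multiset of rational numbers with each a_i ∈ (0,1) that is defined over ℚ, i.e., the polynomial ∏_{i=1}^n (X − e^{2πi a_i}) has integer coefficients, and let p be a prime not dividing the least common denominator of a_1,…,a_n. Then α is closed under the Dwork dash operation: the multiset {a_1',…,a_n'} equals α. -/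
/-!
Write `e(r) = exp(2πir)` and let `N` be the lcm of the denominators. All `e(a)`, `a ∈ α`, are powers
of `ζ = e(1/N)`, and the embedding of `ℚ(ζ)` into `ℂ` sending `ζ ↦ ζ^p` (which exists as `p` is
prime to `N`) fixes the integer polynomial `∏ (X - e(a))`, hence carries its roots to its roots:
`{e(a)} = {e(a)^p} = {e(⟨pa⟩)}`. Since `e` is injective on `[0, 1)`, `α = {⟨pa⟩ : a ∈ α}`. Finally
the dash inverts `a ↦ ⟨pa⟩` on `(0, 1)`: with `m = ⌊pa⌋ < p` we have `-⟨pa⟩ = m - pa ≡ m (mod p)`,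
so `⟨pa⟩' = (pa - m + m)/p = a`.
-/

open Polynomial IntermediateField Complex
open scoped Real

theorem Multiset.eq_of_map_eq_of_injOn {α β : Type*} {f : α → β} {S : Set α} (hf : Set.InjOn f S)
    {s t : Multiset α} (hs : ∀ x ∈ s, x ∈ S) (ht : ∀ x ∈ t, x ∈ S) (h : s.map f = t.map f) :
    s = t := by
  rcases isEmpty_or_nonempty α with _ | _
  · rw [Multiset.eq_zero_of_forall_notMem (s := s) (fun x => isEmptyElim x),
      Multiset.eq_zero_of_forall_notMem (s := t) (fun x => isEmptyElim x)]
  have hinv (u : Multiset α) (hu : ∀ x ∈ u, x ∈ S) : (u.map f).map (Function.invFunOn f S) = u := by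
    rw [Multiset.map_map]
    exact (Multiset.map_congr rfl fun x hx => hf.leftInvOn_invFunOn (hu x hx)).trans u.map_id
  rw [← hinv s hs, h, hinv t ht]

theorem Rat.exists_intCast_eq_mul_of_den_dvd {a : ℚ} {N : ℕ} (h : a.den ∣ N) :
    ∃ m : ℤ, (m : ℚ) = a * N := by
  obtain ⟨c, rfl⟩ := h
  exact ⟨a.num * c, by push_cast; rw [← Rat.mul_den_eq_num]; ring⟩

theorem Polynomial.roots_map_intCast_eq_map {K R : Type*} [CommRing K] [CommRing R] [IsDomain R]
    {P : ℤ[X]} {s : Multiset K} (hP : P.map (Int.castRingHom K) = (s.map fun x => X - C x).prod)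
    (σ : K →+* R) : (P.map (Int.castRingHom R)).roots = s.map σ := by
  rw [← (σ.comp (Int.castRingHom K)).ext_int (Int.castRingHom R), ← map_map, hP,
    Polynomial.map_multiset_prod, Multiset.map_map]
  simpa [Function.comp_def] using roots_multiset_prod_X_sub_C (s.map σ)

theorem IsPrimitiveRoot.exists_algHom_adjoin_pow {L : Type*} [Field L] [CharZero L] {ζ : L} {N : ℕ}
    (hζ : IsPrimitiveRoot ζ N) (hN : 0 < N) {p : ℕ} (hp : p.Coprime N) :
    ∃ σ : ℚ⟮ζ⟯ →ₐ[ℚ] L, σ (AdjoinSimple.gen ℚ ζ) = ζ ^ p := by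
  have hint : IsIntegral ℚ ζ := (hζ.isIntegral hN).tower_top
  have hroot : ζ ^ p ∈ (minpoly ℚ ζ).aroots L := by
    rw [mem_aroots, ← cyclotomic_eq_minpoly_rat hζ hN, aeval_def, ← eval_map, map_cyclotomic]
    exact ⟨cyclotomic_ne_zero N ℚ, (hζ.pow_of_coprime p hp).isRoot_cyclotomic hN⟩
  exact ⟨_, algHomAdjoinIntegralEquiv_symm_apply_gen ℚ hint ⟨ζ ^ p, hroot⟩⟩

theorem firstDigit_natCast_add_mul {p : ℕ} [Fact p.Prime] {m : ℕ} (hm : m < p) {q : ℚ}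
    (hq : ¬ p ∣ q.den) : firstDigit p (m + p * q) = m := by
  have hden : ((q.den : ZMod p)) ≠ 0 := by rwa [Ne, ZMod.natCast_eq_zero_iff]
  have hden' : (((p * q).den : ZMod p)) ≠ 0 := by
    rw [Ne, ZMod.natCast_eq_zero_iff]
    exact fun h => hq (h.trans (by simpa using Rat.mul_den_dvd (p : ℚ) q))
  rw [firstDigit, Rat.cast_add_of_ne_zero (by simp) hden', Rat.cast_mul_of_ne_zero (by simp) hden,
    Rat.cast_natCast, Rat.cast_natCast, ZMod.natCast_self, zero_mul, add_zero,
    ZMod.val_natCast_of_lt hm]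

theorem dworkDash_fract_mul {p : ℕ} [hp : Fact p.Prime] {a : ℚ} (ha₀ : 0 ≤ a) (ha₁ : a < 1)
    (hden : ¬ p ∣ a.den) : dworkDash p (Int.fract (p * a)) = a := by
  have hp₀ : (0 : ℚ) < p := by exact_mod_cast hp.out.pos
  have hpa : 0 ≤ (p : ℚ) * a := by positivity
  set m := ⌊(p : ℚ) * a⌋₊
  have hm : m < p := (Nat.floor_lt hpa).2 (by simpa using mul_lt_mul_of_pos_left ha₁ hp₀)
  have hfract : Int.fract ((p : ℚ) * a) = p * a - m := by
    rw [Int.fract, ← natCast_floor_eq_intCast_floor hpa]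
  have hneg : -Int.fract ((p : ℚ) * a) = m + p * (-a) := by rw [hfract]; ring
  rw [dworkDash, hneg, firstDigit_natCast_add_mul hm (by rwa [Rat.den_neg_eq_den]), hfract]
  field_simp
  ring

noncomputable def expTwoPiI (r : ℚ) : ℂ := exp (2 * π * I * r)

theorem expTwoPiI_injOn : Set.InjOn expTwoPiI (Set.Ico 0 1) := by
  intro a ⟨ha₀, ha₁⟩ b ⟨hb₀, hb₁⟩ h
  obtain ⟨n, hn⟩ := exp_eq_exp_iff_exists_int.1 h
  have h2πI : 2 * π * I ≠ 0 := by simp [Real.pi_ne_zero, I_ne_zero]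
  have hab : (a : ℂ) = b + n := mul_left_cancel₀ h2πI (by rw [hn]; ring)
  replace hab : a = b + n := by exact_mod_cast hab
  have hn₀ : |(n : ℚ)| < 1 := abs_lt.2 ⟨by linarith, by linarith⟩
  obtain rfl : n = 0 := Int.abs_lt_one_iff.1 (by exact_mod_cast hn₀)
  simpa using hab

theorem expTwoPiI_pow (a : ℚ) (n : ℕ) : expTwoPiI a ^ n = expTwoPiI (Int.fract (n * a)) := by
  rw [expTwoPiI, expTwoPiI, ← exp_nat_mul, exp_eq_exp_iff_exists_int]
  exact ⟨⌊(n : ℚ) * a⌋, by push_cast [Int.fract]; ring⟩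

theorem expTwoPiI_eq_zpow {N : ℕ} (hN : N ≠ 0) {a : ℚ} {m : ℤ} (h : (m : ℚ) = a * N) :
    expTwoPiI a = exp (2 * π * I / N) ^ m := by
  rw [expTwoPiI, ← exp_int_mul]
  have hm : (m : ℂ) = a * N := by exact_mod_cast congrArg (fun q : ℚ => (q : ℂ)) h
  rw [hm]
  field_simp

theorem map_expTwoPiI_pow_eq_map_expTwoPiI {α : Multiset ℚ} {P : ℤ[X]}
    (hP : P.map (Int.castRingHom ℂ) = (α.map fun a => X - C (expTwoPiI a)).prod)
    {p : ℕ} (hp : p.Coprime (α.map Rat.den).lcm) :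
    α.map (fun a => expTwoPiI a ^ p) = α.map expTwoPiI := by
  set N := (α.map Rat.den).lcm
  have hN : N ≠ 0 := by simp [N, Multiset.lcm_eq_zero_iff, Rat.den_ne_zero]
  have hm (a : ℚ) (ha : a ∈ α) : ∃ m : ℤ, (m : ℚ) = a * N :=
    Rat.exists_intCast_eq_mul_of_den_dvd (Multiset.dvd_lcm (Multiset.mem_map_of_mem _ ha))
  choose! m hm using hm
  set ζ := exp (2 * π * I / N)
  have hζ : IsPrimitiveRoot ζ N := isPrimitiveRoot_exp N hN
  have hroot (a : ℚ) (ha : a ∈ α) : expTwoPiI a = ζ ^ m a := expTwoPiI_eq_zpow hN (hm a ha)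
  obtain ⟨σ, hσ⟩ := hζ.exists_algHom_adjoin_pow (Nat.pos_of_ne_zero hN) hp
  set s := α.map fun a => AdjoinSimple.gen ℚ ζ ^ m a
  have hs : P.map (Int.castRingHom ℚ⟮ζ⟯) = (s.map fun x => X - C x).prod := by
    apply map_injective (algebraMap ℚ⟮ζ⟯ ℂ) (algebraMap ℚ⟮ζ⟯ ℂ).injective
    rw [Polynomial.map_map, RingHom.ext_int ((algebraMap ℚ⟮ζ⟯ ℂ).comp _) (Int.castRingHom ℂ), hP,
      Polynomial.map_multiset_prod, Multiset.map_map, Multiset.map_map]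
    refine congrArg _ (Multiset.map_congr rfl fun a ha => ?_)
    simp [hroot a ha]
  calc α.map (fun a => expTwoPiI a ^ p) = s.map σ := by
        rw [Multiset.map_map]
        refine Multiset.map_congr rfl fun a ha => ?_
        rw [Function.comp_apply, map_zpow₀, hσ, hroot a ha, ← zpow_natCast, ← zpow_natCast,
          ← zpow_mul, ← zpow_mul, mul_comm]
    _ = (P.map (Int.castRingHom ℂ)).roots := (roots_map_intCast_eq_map hs σ.toRingHom).symm
    _ = α.map expTwoPiI := by
        rw [hP, ← roots_multiset_prod_X_sub_C (α.map expTwoPiI), Multiset.map_map]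
        rfl

/-- If `α` is a multiset of rationals in `(0,1)` defined over `ℚ`
(i.e. `∏ (X - e^{2πi a}) ∈ ℤ[X]`) and `p` is a prime not dividing the least common
denominator of the entries of `α`, then `α` is closed under the Dwork dash operation. -/
theorem defined_over_Q_closed_under_dash (α : Multiset ℚ)
    (hmem : ∀ a ∈ α, 0 < a ∧ a < 1)
    (hQ : ∃ P : Polynomial ℤ, P.map (Int.castRingHom ℂ) =
      (α.map fun a =>
        Polynomial.X - Polynomial.C (Complex.exp (2 * (Real.pi : ℂ) * Complex.I * (a : ℂ)))).prod)
    (p : ℕ) [hp : Fact p.Prime] (hM : ¬ p ∣ (α.map Rat.den).lcm) :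
    α.map (dworkDash p) = α := by
  obtain ⟨P, hP⟩ := hQ
  -- In `hQ` the map runs over the coercion of `α` to `Multiset ℂ`, a monadic `bind`.
  have hP' : P.map (Int.castRingHom ℂ) = (α.map fun a => X - C (expTwoPiI a)).prod :=
    hP.trans (by simp [Multiset.bind_singleton, Multiset.map_map, expTwoPiI])
  have hfract : α.map (fun a : ℚ => Int.fract (p * a)) = α := by
    refine Multiset.eq_of_map_eq_of_injOn expTwoPiI_injOn ?_ ?_ ?_
    · simp [Int.fract_nonneg, Int.fract_lt_one]
    · exact fun a ha => ⟨(hmem a ha).1.le, (hmem a ha).2⟩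
    · simpa [Multiset.map_map, Function.comp_def, expTwoPiI_pow] using
        map_expTwoPiI_pow_eq_map_expTwoPiI hP' ((Nat.Prime.coprime_iff_not_dvd hp.out).2 hM)
  conv_lhs => rw [← hfract, Multiset.map_map]
  refine (Multiset.map_congr rfl fun a ha => ?_).trans α.map_id
  exact dworkDash_fract_mul (hmem a ha).1.le (hmem a ha).2
    fun h => hM (h.trans (Multiset.dvd_lcm (Multiset.mem_map_of_mem _ ha)))
end

section
/- Let p be a prime and let a ∈ ℚ ∩ (0,1) be a p-adic unit (both the numerator and denominator of a are prime to p). Then for every integer k with 0 ≤ k < p, one has ν(k,(p−1)a') = ν(k, [−a − ν(k,(p−1)a)]_0), where a' is the Dwork dash of a. -/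
/-- `ν(k, x) = 0` if `k ≤ x` and `1` otherwise. -/
def nu (k : ℕ) (x : ℚ) : ℕ := if (k : ℚ) ≤ x then 0 else 1

lemma nu_congr (k : ℕ) {x y : ℚ} (h : (k : ℚ) ≤ x ↔ (k : ℚ) ≤ y) : nu k x = nu k y := by
  unfold nu; exact if_congr h rfl rfl

/-- For a prime `p`, `a ∈ ℚ ∩ (0,1)` a `p`-adic unit, and `0 ≤ k < p`,
`ν(k, (p-1)a') = ν(k, [-a - ν(k,(p-1)a)]_0)`. -/
theorem nu_value (p : ℕ) [hp : Fact p.Prime] (a : ℚ) (ha0 : 0 < a) (ha1 : a < 1)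
    (hden : ¬ p ∣ a.den) (hnum : ¬ (p : ℤ) ∣ a.num) (k : ℕ) (hk : k < p) :
    nu k (((p : ℚ) - 1) * dworkDash p a) =
      nu k ((firstDigit p (-a - (nu k (((p : ℚ) - 1) * a) : ℚ)) : ℚ)) := by
  haveI : NeZero p := ⟨hp.out.pos.ne'⟩
  have hpQ : (1 : ℚ) < p := by exact_mod_cast hp.out.one_lt
  have hp0 : (0 : ℚ) < p := by positivity
  -- a is nonzero mod p
  have hane : ((-a : ℚ) : ZMod p) ≠ 0 := by
    rw [Rat.cast_neg, neg_ne_zero, Rat.cast_def]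
    apply div_ne_zero
    · simpa [ZMod.intCast_zmod_eq_zero_iff_dvd] using hnum
    · simpa [ZMod.natCast_eq_zero_iff] using hden
  set b := firstDigit p (-a) with hbdef
  have hblt : b < p := ZMod.val_lt _
  have hb1 : 1 ≤ b := by
    rw [Nat.one_le_iff_ne_zero]
    intro h
    exact hane (by rwa [← ZMod.val_eq_zero])
  have hbQ1 : (1 : ℚ) ≤ b := by exact_mod_cast hb1
  have hbQp : (b : ℚ) < p := by exact_mod_cast hblt
  -- first digit of -a - 1
  have hd1 : firstDigit p (-a - 1) = b - 1 := by
    unfold firstDigit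
    have hb' : ((-a : ℚ) : ZMod p) = (b : ZMod p) := by
      rw [hbdef]; unfold firstDigit; rw [ZMod.natCast_val, ZMod.cast_id]
    have h1 : ((-a - 1 : ℚ) : ZMod p) = ((b - 1 : ℕ) : ZMod p) := by
      have hdz : ((-a).den : ZMod p) ≠ 0 := by
        rw [Rat.neg_den]
        simpa [ZMod.natCast_eq_zero_iff] using hden
      have hoz : (((1:ℚ)).den : ZMod p) ≠ 0 := by
        simp [Rat.den_one]
      have := Rat.cast_sub_of_ne_zero (α := ZMod p) hdz hoz
      rw [Nat.cast_sub hb1, this, hb', Rat.cast_one, Nat.cast_one]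
    rw [h1, ZMod.val_cast_of_lt (by omega)]
  rw [show ((p : ℚ) - 1) * dworkDash p a = ((p : ℚ) - 1) * (a + b) / p by
    unfold dworkDash; rw [← hbdef]; ring]
  by_cases hcase : (k : ℚ) ≤ ((p : ℚ) - 1) * a
  · have hnu0 : nu k (((p : ℚ) - 1) * a) = 0 := if_pos hcase
    rw [hnu0]
    norm_num
    apply nu_congr
    rw [le_div_iff₀ hp0]
    constructor
    · intro h
      by_contra hkb
      have hkb' : (b : ℚ) + 1 ≤ k := by
        have : b + 1 ≤ k := by
          by_contra h'; exact hkb (by exact_mod_cast Nat.lt_succ_iff.mp (not_le.mp h'))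
        exact_mod_cast this
      nlinarith
    · intro h
      nlinarith
  · have hnu0 : nu k (((p : ℚ) - 1) * a) = 1 := if_neg hcase
    rw [hnu0]
    push_cast
    rw [hd1, Nat.cast_sub hb1]
    push_cast
    apply nu_congr
    rw [le_div_iff₀ hp0]
    push_neg at hcase
    constructor
    · intro h
      by_contra hkb
      have hkb' : (b : ℚ) ≤ k := by
        have : b ≤ k := by
          by_contra h'; exact hkb (by
            have : k + 1 ≤ b := not_le.mp h'
            have : (k : ℚ) + 1 ≤ b := by exact_mod_cast this
            linarith)
        exact_mod_cast this
      nlinarith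
    · intro h
      nlinarith
end

section
/- Let p > 3 be a prime, and for the hypergeometric datum α = {1/2,1/2,1/2,1/2,1/3,2/3}, β = {1,1,1,1,1/6,5/6}, let e(k) := 4(−⌊1/2 − k/(p−1)⌋) + (−⌊1/3 − k/(p−1)⌋) + (−⌊2/3 − k/(p−1)⌋) − 4⌊k/(p−1)⌋ − ⌊k/(p−1) + 1/6⌋ − ⌊k/(p−1) + 5/6⌋ for integers 0 ≤ k ≤ p−2. Then e(k) ≥ −1 for all such k, and e(k) = −1 if and only if (p−1)/6 ≤ k ≤ (p−1)/3. In particular s(α,β) = −1 and the bottom interval I(α,β) = [(p−1)/6, (p−1)/3] is connected. -/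
/-- The step function `e(k)` for the hypergeometric datum
`α = {1/2,1/2,1/2,1/2,1/3,2/3}`, `β = {1,1,1,1,1/6,5/6}`. -/
def e6 (p k : ℕ) : ℤ :=
  4 * (-⌊(1 / 2 : ℚ) - (k : ℚ) / ((p : ℚ) - 1)⌋) +
    (-⌊(1 / 3 : ℚ) - (k : ℚ) / ((p : ℚ) - 1)⌋) +
    (-⌊(2 / 3 : ℚ) - (k : ℚ) / ((p : ℚ) - 1)⌋) -
    4 * ⌊(k : ℚ) / ((p : ℚ) - 1)⌋ -
    ⌊(k : ℚ) / ((p : ℚ) - 1) + 1 / 6⌋ -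
    ⌊(k : ℚ) / ((p : ℚ) - 1) + 5 / 6⌋

private lemma floor_eq_of (r : ℚ) (z : ℤ) (h1 : (z : ℚ) ≤ r) (h2 : r < z + 1) :
    ⌊r⌋ = z := by
  rw [Int.floor_eq_iff]
  exact ⟨h1, by push_cast; linarith⟩

set_option maxHeartbeats 1600000 in
/-- For `α = {1/2,1/2,1/2,1/2,1/3,2/3}`, `β = {1,1,1,1,1/6,5/6}` and a prime `p > 3`:
`e(k) ≥ -1` for all `0 ≤ k ≤ p-2`, with equality exactly when
`(p-1)/6 ≤ k ≤ (p-1)/3`.  In particular `s(α,β) = -1` and the bottom interval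
`I(α,β) = [(p-1)/6, (p-1)/3]` is connected. -/
theorem e6_bottom (p : ℕ) (hp : p.Prime) (hp3 : 3 < p) (k : ℕ) (hk : k ≤ p - 2) :
    -1 ≤ e6 p k ∧
      (e6 p k = -1 ↔ ((p : ℚ) - 1) / 6 ≤ (k : ℚ) ∧ (k : ℚ) ≤ ((p : ℚ) - 1) / 3) := by
  have hp4 : (4 : ℚ) ≤ (p : ℚ) := by
    have : (4 : ℕ) ≤ p := hp3
    exact_mod_cast this
  have hk2 : (k : ℚ) ≤ (p : ℚ) - 2 := by
    have h2 : 2 ≤ p := by omega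
    have h : (k : ℚ) ≤ ((p - 2 : ℕ) : ℚ) := by exact_mod_cast hk
    rwa [Nat.cast_sub h2] at h
    done
  unfold e6
  set q : ℚ := (p : ℚ) - 1 with hqdef
  have hq0 : (0 : ℚ) < q := by simp only [hqdef]; linarith
  set x : ℚ := (k : ℚ) / q with hxdef
  have hkx : (k : ℚ) = x * q := (div_mul_cancel₀ _ hq0.ne').symm
  have hx0 : 0 ≤ x := div_nonneg (Nat.cast_nonneg k) hq0.le
  have hx1 : x < 1 := by
    rw [hxdef, div_lt_one hq0]
    simp only [hqdef]; linarith
  rcases lt_or_ge x (1 / 6) with h1 | h1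
  · -- x < 1/6 : e = 0
    have F1 : ⌊(1 / 2 : ℚ) - x⌋ = 0 := floor_eq_of _ 0 (by push_cast; linarith) (by push_cast; linarith)
    have F2 : ⌊(1 / 3 : ℚ) - x⌋ = 0 := floor_eq_of _ 0 (by push_cast; linarith) (by push_cast; linarith)
    have F3 : ⌊(2 / 3 : ℚ) - x⌋ = 0 := floor_eq_of _ 0 (by push_cast; linarith) (by push_cast; linarith)
    have F4 : ⌊x⌋ = 0 := floor_eq_of _ 0 (by push_cast; linarith) (by push_cast; linarith)
    have F5 : ⌊x + 1 / 6⌋ = 0 := floor_eq_of _ 0 (by push_cast; linarith) (by push_cast; linarith)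
    have F6 : ⌊x + 5 / 6⌋ = 0 := floor_eq_of _ 0 (by push_cast; linarith) (by push_cast; linarith)
    rw [F1, F2, F3, F4, F5, F6]
    refine ⟨by norm_num, ?_⟩
    constructor
    · intro h; norm_num at h
    · rintro ⟨ha, hb⟩
      rw [hkx] at ha
      exact absurd (le_of_mul_le_mul_right (by linarith : (1/6:ℚ) * q ≤ x * q) hq0)
        (by linarith)
  · rcases le_or_gt x (1 / 3) with h2 | h2
    · -- 1/6 ≤ x ≤ 1/3 : e = -1
      have F1 : ⌊(1 / 2 : ℚ) - x⌋ = 0 := floor_eq_of _ 0 (by push_cast; linarith) (by push_cast; linarith)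
      have F2 : ⌊(1 / 3 : ℚ) - x⌋ = 0 := floor_eq_of _ 0 (by push_cast; linarith) (by push_cast; linarith)
      have F3 : ⌊(2 / 3 : ℚ) - x⌋ = 0 := floor_eq_of _ 0 (by push_cast; linarith) (by push_cast; linarith)
      have F4 : ⌊x⌋ = 0 := floor_eq_of _ 0 (by push_cast; linarith) (by push_cast; linarith)
      have F5 : ⌊x + 1 / 6⌋ = 0 := floor_eq_of _ 0 (by push_cast; linarith) (by push_cast; linarith)
      have F6 : ⌊x + 5 / 6⌋ = 1 := floor_eq_of _ 1 (by push_cast; linarith) (by push_cast; linarith)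
      rw [F1, F2, F3, F4, F5, F6]
      refine ⟨by norm_num, ?_⟩
      constructor
      · intro _
        rw [hkx]
        have ha := mul_le_mul_of_nonneg_right h1 hq0.le
        have hb := mul_le_mul_of_nonneg_right h2 hq0.le
        constructor <;> linarith
      · intro _; norm_num
    · rcases le_or_gt x (1 / 2) with h3 | h3
      · -- 1/3 < x ≤ 1/2 : e = 0
        have F1 : ⌊(1 / 2 : ℚ) - x⌋ = 0 := floor_eq_of _ 0 (by push_cast; linarith) (by push_cast; linarith)
        have F2 : ⌊(1 / 3 : ℚ) - x⌋ = -1 := floor_eq_of _ (-1) (by push_cast; linarith) (by push_cast; linarith)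
        have F3 : ⌊(2 / 3 : ℚ) - x⌋ = 0 := floor_eq_of _ 0 (by push_cast; linarith) (by push_cast; linarith)
        have F4 : ⌊x⌋ = 0 := floor_eq_of _ 0 (by push_cast; linarith) (by push_cast; linarith)
        have F5 : ⌊x + 1 / 6⌋ = 0 := floor_eq_of _ 0 (by push_cast; linarith) (by push_cast; linarith)
        have F6 : ⌊x + 5 / 6⌋ = 1 := floor_eq_of _ 1 (by push_cast; linarith) (by push_cast; linarith)
        rw [F1, F2, F3, F4, F5, F6]
        refine ⟨by norm_num, ?_⟩
        constructor
        · intro h; norm_num at h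
        · rintro ⟨ha, hb⟩
          rw [hkx] at hb
          exact absurd (le_of_mul_le_mul_right (by linarith : x * q ≤ (1/3:ℚ) * q) hq0)
            (by linarith)
      · rcases le_or_gt x (2 / 3) with h4 | h4
        · -- 1/2 < x ≤ 2/3 : e = 4
          have F1 : ⌊(1 / 2 : ℚ) - x⌋ = -1 := floor_eq_of _ (-1) (by push_cast; linarith) (by push_cast; linarith)
          have F2 : ⌊(1 / 3 : ℚ) - x⌋ = -1 := floor_eq_of _ (-1) (by push_cast; linarith) (by push_cast; linarith)
          have F3 : ⌊(2 / 3 : ℚ) - x⌋ = 0 := floor_eq_of _ 0 (by push_cast; linarith) (by push_cast; linarith)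
          have F4 : ⌊x⌋ = 0 := floor_eq_of _ 0 (by push_cast; linarith) (by push_cast; linarith)
          have F5 : ⌊x + 1 / 6⌋ = 0 := floor_eq_of _ 0 (by push_cast; linarith) (by push_cast; linarith)
          have F6 : ⌊x + 5 / 6⌋ = 1 := floor_eq_of _ 1 (by push_cast; linarith) (by push_cast; linarith)
          rw [F1, F2, F3, F4, F5, F6]
          refine ⟨by norm_num, ?_⟩
          constructor
          · intro h; norm_num at h
          · rintro ⟨ha, hb⟩
            rw [hkx] at hb
            exact absurd (le_of_mul_le_mul_right (by linarith : x * q ≤ (1/3:ℚ) * q) hq0)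
              (by linarith)
        · rcases lt_or_ge x (5 / 6) with h5 | h5
          · -- 2/3 < x < 5/6 : e = 5
            have F1 : ⌊(1 / 2 : ℚ) - x⌋ = -1 := floor_eq_of _ (-1) (by push_cast; linarith) (by push_cast; linarith)
            have F2 : ⌊(1 / 3 : ℚ) - x⌋ = -1 := floor_eq_of _ (-1) (by push_cast; linarith) (by push_cast; linarith)
            have F3 : ⌊(2 / 3 : ℚ) - x⌋ = -1 := floor_eq_of _ (-1) (by push_cast; linarith) (by push_cast; linarith)
            have F4 : ⌊x⌋ = 0 := floor_eq_of _ 0 (by push_cast; linarith) (by push_cast; linarith)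
            have F5 : ⌊x + 1 / 6⌋ = 0 := floor_eq_of _ 0 (by push_cast; linarith) (by push_cast; linarith)
            have F6 : ⌊x + 5 / 6⌋ = 1 := floor_eq_of _ 1 (by push_cast; linarith) (by push_cast; linarith)
            rw [F1, F2, F3, F4, F5, F6]
            refine ⟨by norm_num, ?_⟩
            constructor
            · intro h; norm_num at h
            · rintro ⟨ha, hb⟩
              rw [hkx] at hb
              exact absurd (le_of_mul_le_mul_right (by linarith : x * q ≤ (1/3:ℚ) * q) hq0)
                (by linarith)
          · -- 5/6 ≤ x < 1 : e = 4
            have F1 : ⌊(1 / 2 : ℚ) - x⌋ = -1 := floor_eq_of _ (-1) (by push_cast; linarith) (by push_cast; linarith)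
            have F2 : ⌊(1 / 3 : ℚ) - x⌋ = -1 := floor_eq_of _ (-1) (by push_cast; linarith) (by push_cast; linarith)
            have F3 : ⌊(2 / 3 : ℚ) - x⌋ = -1 := floor_eq_of _ (-1) (by push_cast; linarith) (by push_cast; linarith)
            have F4 : ⌊x⌋ = 0 := floor_eq_of _ 0 (by push_cast; linarith) (by push_cast; linarith)
            have F5 : ⌊x + 1 / 6⌋ = 1 := floor_eq_of _ 1 (by push_cast; linarith) (by push_cast; linarith)
            have F6 : ⌊x + 5 / 6⌋ = 1 := floor_eq_of _ 1 (by push_cast; linarith) (by push_cast; linarith)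
            rw [F1, F2, F3, F4, F5, F6]
            refine ⟨by norm_num, ?_⟩
            constructor
            · intro h; norm_num at h
            · rintro ⟨ha, hb⟩
              rw [hkx] at hb
              exact absurd (le_of_mul_le_mul_right (by linarith : x * q ≤ (1/3:ℚ) * q) hq0)
                (by linarith)
end

section
/- Let p > 3 be a prime, and for the hypergeometric datum α = {1/2,1/2,1/3,2/3,1/3,2/3}, β = {1,1,1/6,5/6,1/6,5/6}, let e(k) := 2(−⌊1/2 − k/(p−1)⌋) + 2(−⌊1/3 − k/(p−1)⌋) + 2(−⌊2/3 − k/(p−1)⌋) − 2⌊k/(p−1)⌋ − 2⌊k/(p−1) + 1/6⌋ − 2⌊k/(p−1) + 5/6⌋ for integers 0 ≤ k ≤ p−2. Then e(k) ≥ −2 for all such k, and e(k) = −2 if and only if (p−1)/6 ≤ k ≤ (p−1)/3. In particular the bottom interval I(α,β) is connected. -/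
/-- The step function `e(k)` for the hypergeometric datum
`α = {1/2,1/2,1/3,2/3,1/3,2/3}`, `β = {1,1,1/6,5/6,1/6,5/6}`. -/
def e8 (p k : ℕ) : ℤ :=
  2 * (-⌊(1 / 2 : ℚ) - (k : ℚ) / ((p : ℚ) - 1)⌋) +
    2 * (-⌊(1 / 3 : ℚ) - (k : ℚ) / ((p : ℚ) - 1)⌋) +
    2 * (-⌊(2 / 3 : ℚ) - (k : ℚ) / ((p : ℚ) - 1)⌋) -
    2 * ⌊(k : ℚ) / ((p : ℚ) - 1)⌋ -
    2 * ⌊(k : ℚ) / ((p : ℚ) - 1) + 1 / 6⌋ -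
    2 * ⌊(k : ℚ) / ((p : ℚ) - 1) + 5 / 6⌋

private lemma floor_eq' (t : ℚ) (z : ℤ) (h1 : (z : ℚ) ≤ t) (h2 : t < z + 1) : ⌊t⌋ = z :=
  Int.floor_eq_iff.mpr ⟨h1, h2⟩

set_option maxHeartbeats 1000000 in
/-- For `α = {1/2,1/2,1/3,2/3,1/3,2/3}`, `β = {1,1,1/6,5/6,1/6,5/6}` and a prime `p > 3`:
`e(k) ≥ -2` for all `0 ≤ k ≤ p-2`, with equality exactly when `(p-1)/6 ≤ k ≤ (p-1)/3`.
In particular the bottom interval `I(α,β)` is connected. -/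
theorem e8_bottom (p : ℕ) (hp : p.Prime) (hp3 : 3 < p) (k : ℕ) (hk : k ≤ p - 2) :
    -2 ≤ e8 p k ∧
      (e8 p k = -2 ↔ ((p : ℚ) - 1) / 6 ≤ (k : ℚ) ∧ (k : ℚ) ≤ ((p : ℚ) - 1) / 3) := by
  have hq0 : (0:ℚ) < (p:ℚ) - 1 := by
    have : (4:ℚ) ≤ (p:ℚ) := by exact_mod_cast hp3
    linarith
  set t : ℚ := (k:ℚ) / ((p:ℚ) - 1) with htdef
  have ht0 : 0 ≤ t := div_nonneg (by positivity) hq0.le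
  have hk2 : (k:ℚ) + 2 ≤ (p:ℚ) := by
    have h : k + 2 ≤ p := by omega
    exact_mod_cast h
  have ht1 : t < 1 := by
    rw [htdef, div_lt_one hq0]; linarith
  have htk : t * ((p:ℚ) - 1) = k := div_mul_cancel₀ _ hq0.ne'
  have he : e8 p k = 2*(-⌊(1/2:ℚ) - t⌋) + 2*(-⌊(1/3:ℚ) - t⌋) + 2*(-⌊(2/3:ℚ) - t⌋)
      - 2*⌊t⌋ - 2*⌊t + 1/6⌋ - 2*⌊t + 5/6⌋ := rfl
  have hL : ((p:ℚ)-1)/6 ≤ (k:ℚ) ↔ 1/6 ≤ t := by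
    constructor <;> intro h <;> nlinarith [htk]
  have hR : (k:ℚ) ≤ ((p:ℚ)-1)/3 ↔ t ≤ 1/3 := by
    constructor <;> intro h <;> nlinarith [htk]
  have f0 : ⌊t⌋ = 0 := floor_eq' t 0 (by push_cast; linarith) (by push_cast; linarith)
  rcases lt_or_ge t (1/6) with h16 | h16
  · -- t < 1/6 : e = 0
    have f1 : ⌊(1/2:ℚ) - t⌋ = 0 := floor_eq' _ 0 (by push_cast; linarith) (by push_cast; linarith)
    have f2 : ⌊(1/3:ℚ) - t⌋ = 0 := floor_eq' _ 0 (by push_cast; linarith) (by push_cast; linarith)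
    have f3 : ⌊(2/3:ℚ) - t⌋ = 0 := floor_eq' _ 0 (by push_cast; linarith) (by push_cast; linarith)
    have f5 : ⌊t + 1/6⌋ = 0 := floor_eq' _ 0 (by push_cast; linarith) (by push_cast; linarith)
    have f6 : ⌊t + 5/6⌋ = 0 := floor_eq' _ 0 (by push_cast; linarith) (by push_cast; linarith)
    rw [he, f0, f1, f2, f3, f5, f6]
    refine ⟨by norm_num, ?_⟩
    constructor
    · intro h; norm_num at h
    · rintro ⟨hA, hB⟩; rw [hL] at hA; linarith
  rcases le_or_gt t (1/3) with h13 | h13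
  · -- 1/6 ≤ t ≤ 1/3 : e = -2
    have f1 : ⌊(1/2:ℚ) - t⌋ = 0 := floor_eq' _ 0 (by push_cast; linarith) (by push_cast; linarith)
    have f2 : ⌊(1/3:ℚ) - t⌋ = 0 := floor_eq' _ 0 (by push_cast; linarith) (by push_cast; linarith)
    have f3 : ⌊(2/3:ℚ) - t⌋ = 0 := floor_eq' _ 0 (by push_cast; linarith) (by push_cast; linarith)
    have f5 : ⌊t + 1/6⌋ = 0 := floor_eq' _ 0 (by push_cast; linarith) (by push_cast; linarith)
    have f6 : ⌊t + 5/6⌋ = 1 := floor_eq' _ 1 (by push_cast; linarith) (by push_cast; linarith)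
    rw [he, f0, f1, f2, f3, f5, f6]
    refine ⟨by norm_num, ?_⟩
    constructor
    · intro _; exact ⟨hL.mpr h16, hR.mpr h13⟩
    · intro _; norm_num
  rcases le_or_gt t (1/2) with h12 | h12
  · -- 1/3 < t ≤ 1/2 : e = 0
    have f1 : ⌊(1/2:ℚ) - t⌋ = 0 := floor_eq' _ 0 (by push_cast; linarith) (by push_cast; linarith)
    have f2 : ⌊(1/3:ℚ) - t⌋ = -1 := floor_eq' _ (-1) (by push_cast; linarith) (by push_cast; linarith)
    have f3 : ⌊(2/3:ℚ) - t⌋ = 0 := floor_eq' _ 0 (by push_cast; linarith) (by push_cast; linarith)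
    have f5 : ⌊t + 1/6⌋ = 0 := floor_eq' _ 0 (by push_cast; linarith) (by push_cast; linarith)
    have f6 : ⌊t + 5/6⌋ = 1 := floor_eq' _ 1 (by push_cast; linarith) (by push_cast; linarith)
    rw [he, f0, f1, f2, f3, f5, f6]
    refine ⟨by norm_num, ?_⟩
    constructor
    · intro h; norm_num at h
    · rintro ⟨hA, hB⟩; rw [hR] at hB; linarith
  rcases le_or_gt t (2/3) with h23 | h23
  · -- 1/2 < t ≤ 2/3 : e = 2
    have f1 : ⌊(1/2:ℚ) - t⌋ = -1 := floor_eq' _ (-1) (by push_cast; linarith) (by push_cast; linarith)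
    have f2 : ⌊(1/3:ℚ) - t⌋ = -1 := floor_eq' _ (-1) (by push_cast; linarith) (by push_cast; linarith)
    have f3 : ⌊(2/3:ℚ) - t⌋ = 0 := floor_eq' _ 0 (by push_cast; linarith) (by push_cast; linarith)
    have f5 : ⌊t + 1/6⌋ = 0 := floor_eq' _ 0 (by push_cast; linarith) (by push_cast; linarith)
    have f6 : ⌊t + 5/6⌋ = 1 := floor_eq' _ 1 (by push_cast; linarith) (by push_cast; linarith)
    rw [he, f0, f1, f2, f3, f5, f6]
    refine ⟨by norm_num, ?_⟩
    constructor
    · intro h; norm_num at h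
    · rintro ⟨hA, hB⟩; rw [hR] at hB; linarith
  rcases lt_or_ge t (5/6) with h56 | h56
  · -- 2/3 < t < 5/6 : e = 4
    have f1 : ⌊(1/2:ℚ) - t⌋ = -1 := floor_eq' _ (-1) (by push_cast; linarith) (by push_cast; linarith)
    have f2 : ⌊(1/3:ℚ) - t⌋ = -1 := floor_eq' _ (-1) (by push_cast; linarith) (by push_cast; linarith)
    have f3 : ⌊(2/3:ℚ) - t⌋ = -1 := floor_eq' _ (-1) (by push_cast; linarith) (by push_cast; linarith)
    have f5 : ⌊t + 1/6⌋ = 0 := floor_eq' _ 0 (by push_cast; linarith) (by push_cast; linarith)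
    have f6 : ⌊t + 5/6⌋ = 1 := floor_eq' _ 1 (by push_cast; linarith) (by push_cast; linarith)
    rw [he, f0, f1, f2, f3, f5, f6]
    refine ⟨by norm_num, ?_⟩
    constructor
    · intro h; norm_num at h
    · rintro ⟨hA, hB⟩; rw [hR] at hB; linarith
  · -- 5/6 ≤ t < 1 : e = 2
    have f1 : ⌊(1/2:ℚ) - t⌋ = -1 := floor_eq' _ (-1) (by push_cast; linarith) (by push_cast; linarith)
    have f2 : ⌊(1/3:ℚ) - t⌋ = -1 := floor_eq' _ (-1) (by push_cast; linarith) (by push_cast; linarith)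
    have f3 : ⌊(2/3:ℚ) - t⌋ = -1 := floor_eq' _ (-1) (by push_cast; linarith) (by push_cast; linarith)
    have f5 : ⌊t + 1/6⌋ = 1 := floor_eq' _ 1 (by push_cast; linarith) (by push_cast; linarith)
    have f6 : ⌊t + 5/6⌋ = 1 := floor_eq' _ 1 (by push_cast; linarith) (by push_cast; linarith)
    rw [he, f0, f1, f2, f3, f5, f6]
    refine ⟨by norm_num, ?_⟩
    constructor
    · intro h; norm_num at h
    · rintro ⟨hA, hB⟩; rw [hR] at hB; linarith
end

section
/- Let p > 3 be a prime, and for the hypergeometric datum α = {1/2,1/2,1/2,1/2,1/6,5/6}, β = {1,1,1,1,1/3,2/3}, let e(k) := 4(−⌊1/2 − k/(p−1)⌋) + (−⌊1/6 − k/(p−1)⌋) + (−⌊5/6 − k/(p−1)⌋) − 4⌊k/(p−1)⌋ − ⌊k/(p−1) + 1/3⌋ − ⌊k/(p−1) + 2/3⌋ for integers 0 ≤ k ≤ p−2. Then e(k) ≥ 0 for all such k, and e(k) = 0 if and only if 0 ≤ k ≤ (p−1)/6 or (p−1)/3 ≤ k ≤ (p−1)/2. In particular s(α,β) = 0 and the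 bottom interval I(α,β) consists of two disjoint intervals. -/
/-- The step function `e(k)` for the hypergeometric datum
`α = {1/2,1/2,1/2,1/2,1/6,5/6}`, `β = {1,1,1,1,1/3,2/3}`. -/
def e9 (p k : ℕ) : ℤ :=
  4 * (-⌊(1 / 2 : ℚ) - (k : ℚ) / ((p : ℚ) - 1)⌋) +
    (-⌊(1 / 6 : ℚ) - (k : ℚ) / ((p : ℚ) - 1)⌋) +
    (-⌊(5 / 6 : ℚ) - (k : ℚ) / ((p : ℚ) - 1)⌋) -
    4 * ⌊(k : ℚ) / ((p : ℚ) - 1)⌋ -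
    ⌊(k : ℚ) / ((p : ℚ) - 1) + 1 / 3⌋ -
    ⌊(k : ℚ) / ((p : ℚ) - 1) + 2 / 3⌋

private lemma fl_eq (x : ℚ) (n : ℤ) (h1 : (n : ℚ) ≤ x) (h2 : x < n + 1) : ⌊x⌋ = n :=
  Int.floor_eq_iff.mpr ⟨h1, h2⟩

set_option maxHeartbeats 1000000 in
/-- For `α = {1/2,1/2,1/2,1/2,1/6,5/6}`, `β = {1,1,1,1,1/3,2/3}` and a prime `p > 3`:
`e(k) ≥ 0` for all `0 ≤ k ≤ p-2`, with equality exactly when `0 ≤ k ≤ (p-1)/6` or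
`(p-1)/3 ≤ k ≤ (p-1)/2`.  In particular `s(α,β) = 0` and the bottom set `I(α,β)`
consists of two disjoint intervals. -/
theorem e9_bottom (p : ℕ) (hp : p.Prime) (hp3 : 3 < p) (k : ℕ) (hk : k ≤ p - 2) :
    0 ≤ e9 p k ∧
      (e9 p k = 0 ↔
        (0 ≤ (k : ℚ) ∧ (k : ℚ) ≤ ((p : ℚ) - 1) / 6) ∨
        (((p : ℚ) - 1) / 3 ≤ (k : ℚ) ∧ (k : ℚ) ≤ ((p : ℚ) - 1) / 2)) := by
  have hp4 : (4 : ℚ) ≤ (p : ℚ) := by exact_mod_cast (by omega : 4 ≤ p)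
  simp only [e9]
  set q : ℚ := (p : ℚ) - 1 with hqdef
  have hq0 : (0 : ℚ) < q := by rw [hqdef]; linarith
  have hK0 : (0 : ℚ) ≤ (k : ℚ) := Nat.cast_nonneg k
  have hKq : (k : ℚ) < q := by
    have h1 : (k : ℚ) ≤ ((p - 2 : ℕ) : ℚ) := by exact_mod_cast hk
    have h2 : ((p - 2 : ℕ) : ℚ) = (p : ℚ) - 2 := by
      rw [Nat.cast_sub (by omega : 2 ≤ p)]; norm_num
    rw [hqdef]; linarith [h1, h2.le, h2.ge]
  set u : ℚ := (k : ℚ) / q with hudef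
  have hu0 : (0 : ℚ) ≤ u := div_nonneg hK0 hq0.le
  have hu1 : u < 1 := (div_lt_one hq0).mpr hKq
  -- translations of the RHS conditions
  have e1 : (k : ℚ) ≤ q / 6 ↔ 6 * (k : ℚ) ≤ q := by
    rw [le_div_iff₀ (by norm_num : (0:ℚ) < 6)]; constructor <;> intro h <;> linarith
  have e2 : q / 3 ≤ (k : ℚ) ↔ q ≤ 3 * (k : ℚ) := by
    rw [div_le_iff₀ (by norm_num : (0:ℚ) < 3)]; constructor <;> intro h <;> linarith
  have e3 : (k : ℚ) ≤ q / 2 ↔ 2 * (k : ℚ) ≤ q := by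
    rw [le_div_iff₀ (by norm_num : (0:ℚ) < 2)]; constructor <;> intro h <;> linarith
  have hu : ∀ c : ℚ, (k : ℚ) ≤ c * q → u ≤ c := fun c h => by
    rw [hudef, div_le_iff₀ hq0]; exact h
  have hu' : ∀ c : ℚ, c * q ≤ (k : ℚ) → c ≤ u := fun c h => by
    rw [hudef, le_div_iff₀ hq0]; exact h
  have hus : ∀ c : ℚ, (k : ℚ) < c * q → u < c := fun c h => by
    rw [hudef, div_lt_iff₀ hq0]; exact h
  have hus' : ∀ c : ℚ, c * q < (k : ℚ) → c < u := fun c h => by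
    rw [hudef, lt_div_iff₀ hq0]; exact h
  have f0 : ⌊u⌋ = 0 := fl_eq u 0 (by push_cast; linarith) (by push_cast; linarith)
  rcases le_or_gt (6 * (k : ℚ)) q with h1 | h1
  · -- region 1 : u ≤ 1/6, e = 0
    have hub : u ≤ 1 / 6 := hu (1 / 6) (by linarith)
    have fa : ⌊(1/2 : ℚ) - u⌋ = 0 := fl_eq _ 0 (by push_cast; linarith) (by push_cast; linarith)
    have fb : ⌊(1/6 : ℚ) - u⌋ = 0 := fl_eq _ 0 (by push_cast; linarith) (by push_cast; linarith)
    have fc : ⌊(5/6 : ℚ) - u⌋ = 0 := fl_eq _ 0 (by push_cast; linarith) (by push_cast; linarith)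
    have fd : ⌊u + 1/3⌋ = 0 := fl_eq _ 0 (by push_cast; linarith) (by push_cast; linarith)
    have fe : ⌊u + 2/3⌋ = 0 := fl_eq _ 0 (by push_cast; linarith) (by push_cast; linarith)
    rw [fa, fb, fc, f0, fd, fe]
    refine ⟨by norm_num, ?_⟩
    constructor
    · intro _; exact Or.inl ⟨hK0, e1.mpr h1⟩
    · intro _; norm_num
  · rcases lt_or_ge (3 * (k : ℚ)) q with h2 | h2
    · -- region 2 : 1/6 < u < 1/3, e = 1
      have hlb : 1 / 6 < u := hus' (1 / 6) (by linarith)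
      have hub : u < 1 / 3 := hus (1 / 3) (by linarith)
      have fa : ⌊(1/2 : ℚ) - u⌋ = 0 := fl_eq _ 0 (by push_cast; linarith) (by push_cast; linarith)
      have fb : ⌊(1/6 : ℚ) - u⌋ = -1 := fl_eq _ (-1) (by push_cast; linarith) (by push_cast; linarith)
      have fc : ⌊(5/6 : ℚ) - u⌋ = 0 := fl_eq _ 0 (by push_cast; linarith) (by push_cast; linarith)
      have fd : ⌊u + 1/3⌋ = 0 := fl_eq _ 0 (by push_cast; linarith) (by push_cast; linarith)
      have fe : ⌊u + 2/3⌋ = 0 := fl_eq _ 0 (by push_cast; linarith) (by push_cast; linarith)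
      rw [fa, fb, fc, f0, fd, fe]
      refine ⟨by norm_num, ?_⟩
      constructor
      · intro h; norm_num at h
      · rintro (⟨-, h⟩ | ⟨h, -⟩)
        · exact absurd (e1.mp h) (by linarith)
        · exact absurd (e2.mp h) (by linarith)
    · rcases le_or_gt (2 * (k : ℚ)) q with h3 | h3
      · -- region 3 : 1/3 ≤ u ≤ 1/2, e = 0
        have hlb : 1 / 3 ≤ u := hu' (1 / 3) (by linarith)
        have hub : u ≤ 1 / 2 := hu (1 / 2) (by linarith)
        have fa : ⌊(1/2 : ℚ) - u⌋ = 0 := fl_eq _ 0 (by push_cast; linarith) (by push_cast; linarith)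
        have fb : ⌊(1/6 : ℚ) - u⌋ = -1 := fl_eq _ (-1) (by push_cast; linarith) (by push_cast; linarith)
        have fc : ⌊(5/6 : ℚ) - u⌋ = 0 := fl_eq _ 0 (by push_cast; linarith) (by push_cast; linarith)
        have fd : ⌊u + 1/3⌋ = 0 := fl_eq _ 0 (by push_cast; linarith) (by push_cast; linarith)
        have fe : ⌊u + 2/3⌋ = 1 := fl_eq _ 1 (by push_cast; linarith) (by push_cast; linarith)
        rw [fa, fb, fc, f0, fd, fe]
        refine ⟨by norm_num, ?_⟩
        constructor
        · intro _; exact Or.inr ⟨e2.mpr h2, e3.mpr h3⟩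
        · intro _; norm_num
      · rcases lt_or_ge (3 * (k : ℚ)) (2 * q) with h4 | h4
        · -- region 4 : 1/2 < u < 2/3, e = 4
          have hlb : 1 / 2 < u := hus' (1 / 2) (by linarith)
          have hub : u < 2 / 3 := hus (2 / 3) (by linarith)
          have fa : ⌊(1/2 : ℚ) - u⌋ = -1 := fl_eq _ (-1) (by push_cast; linarith) (by push_cast; linarith)
          have fb : ⌊(1/6 : ℚ) - u⌋ = -1 := fl_eq _ (-1) (by push_cast; linarith) (by push_cast; linarith)
          have fc : ⌊(5/6 : ℚ) - u⌋ = 0 := fl_eq _ 0 (by push_cast; linarith) (by push_cast; linarith)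
          have fd : ⌊u + 1/3⌋ = 0 := fl_eq _ 0 (by push_cast; linarith) (by push_cast; linarith)
          have fe : ⌊u + 2/3⌋ = 1 := fl_eq _ 1 (by push_cast; linarith) (by push_cast; linarith)
          rw [fa, fb, fc, f0, fd, fe]
          refine ⟨by norm_num, ?_⟩
          constructor
          · intro h; norm_num at h
          · rintro (⟨-, h⟩ | ⟨-, h⟩)
            · exact absurd (e1.mp h) (by linarith)
            · exact absurd (e3.mp h) (by linarith)
        · rcases le_or_gt (6 * (k : ℚ)) (5 * q) with h5 | h5
          · -- region 5 : 2/3 ≤ u ≤ 5/6, e = 3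
            have hlb : 2 / 3 ≤ u := hu' (2 / 3) (by linarith)
            have hub : u ≤ 5 / 6 := hu (5 / 6) (by linarith)
            have fa : ⌊(1/2 : ℚ) - u⌋ = -1 := fl_eq _ (-1) (by push_cast; linarith) (by push_cast; linarith)
            have fb : ⌊(1/6 : ℚ) - u⌋ = -1 := fl_eq _ (-1) (by push_cast; linarith) (by push_cast; linarith)
            have fc : ⌊(5/6 : ℚ) - u⌋ = 0 := fl_eq _ 0 (by push_cast; linarith) (by push_cast; linarith)
            have fd : ⌊u + 1/3⌋ = 1 := fl_eq _ 1 (by push_cast; linarith) (by push_cast; linarith)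
            have fe : ⌊u + 2/3⌋ = 1 := fl_eq _ 1 (by push_cast; linarith) (by push_cast; linarith)
            rw [fa, fb, fc, f0, fd, fe]
            refine ⟨by norm_num, ?_⟩
            constructor
            · intro h; norm_num at h
            · rintro (⟨-, h⟩ | ⟨-, h⟩)
              · exact absurd (e1.mp h) (by linarith)
              · exact absurd (e3.mp h) (by linarith)
          · -- region 6 : 5/6 < u < 1, e = 4
            have hlb : 5 / 6 < u := hus' (5 / 6) (by linarith)
            have fa : ⌊(1/2 : ℚ) - u⌋ = -1 := fl_eq _ (-1) (by push_cast; linarith) (by push_cast; linarith)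
            have fb : ⌊(1/6 : ℚ) - u⌋ = -1 := fl_eq _ (-1) (by push_cast; linarith) (by push_cast; linarith)
            have fc : ⌊(5/6 : ℚ) - u⌋ = -1 := fl_eq _ (-1) (by push_cast; linarith) (by push_cast; linarith)
            have fd : ⌊u + 1/3⌋ = 1 := fl_eq _ 1 (by push_cast; linarith) (by push_cast; linarith)
            have fe : ⌊u + 2/3⌋ = 1 := fl_eq _ 1 (by push_cast; linarith) (by push_cast; linarith)
            rw [fa, fb, fc, f0, fd, fe]
            refine ⟨by norm_num, ?_⟩
            constructor
            · intro h; norm_num at h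
            · rintro (⟨-, h⟩ | ⟨-, h⟩)
              · exact absurd (e1.mp h) (by linarith)
              · exact absurd (e3.mp h) (by linarith)
end

section
/- For every prime p > 5, the truncated hypergeometric series ₇F₆[1/2, 5/4, 1/2, 1/2, 1/2, 1/3, 2/3; 1/4, 1, 1, 1, 7/6, 5/6; 1]_{p−1}, i.e., the rational number Σ_{k=0}^{p−1} ((1/2)_k (5/4)_k (1/2)_k (1/2)_k (1/2)_k (1/3)_k (2/3)_k) / ((1/4)_k (1)_k (1)_k (1)_k (7/6)_k (5/6)_k · k!), is a p-adic integer, i.e., its p-adic valuation is ≥ 0. -/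
lemma rf_succ (a : ℚ) (k : ℕ) : risingFact a (k+1) = risingFact a k * (a + k) := by
  simp [risingFact, Finset.prod_range_succ]

lemma rf_zero (a : ℚ) : risingFact a 0 = 1 := by simp [risingFact]

lemma rf_pos {a : ℚ} (ha : 0 < a) (k : ℕ) : 0 < risingFact a k := by
  induction k with
  | zero => simp [rf_zero]
  | succ n ih => rw [rf_succ]; positivity

lemma rf_one (k : ℕ) : risingFact 1 k = (k.factorial : ℚ) := by
  induction k with
  | zero => simp [rf_zero]
  | succ n ih => rw [rf_succ, ih]; push_cast [Nat.factorial_succ]; ring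

lemma rf_half (k : ℕ) : 4^k * (k.factorial : ℚ) * risingFact (1/2) k = ((2*k).factorial : ℚ) := by
  induction k with
  | zero => simp [rf_zero]
  | succ n ih =>
    rw [rf_succ, show 2*(n+1) = (2*n)+1+1 by ring]
    push_cast [Nat.factorial_succ] at ih ⊢
    linear_combination (4*((n:ℚ)+1)*(1/2+n)) * ih

lemma rf_third (k : ℕ) : 27^k * (k.factorial : ℚ) * (risingFact (1/3) k * risingFact (2/3) k)
    = ((3*k).factorial : ℚ) := by
  induction k with
  | zero => simp [rf_zero]
  | succ n ih =>
    rw [rf_succ, rf_succ, show 3*(n+1) = (3*n)+1+1+1 by ring]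
    push_cast [Nat.factorial_succ] at ih ⊢
    linear_combination (27*((n:ℚ)+1)*(1/3+n)*(2/3+n)) * ih

lemma rf_quarter (k : ℕ) : risingFact (5/4) k = (4*k+1) * risingFact (1/4) k := by
  induction k with
  | zero => simp [rf_zero]
  | succ n ih =>
    rw [rf_succ, rf_succ, ih]
    push_cast
    ring

lemma rf_sixth (k : ℕ) : 16^k * 27^k * ((2*k).factorial : ℚ) * ((3*k).factorial : ℚ) *
    (risingFact (7/6) k * risingFact (5/6) k) = ((6*k+1).factorial : ℚ) * (k.factorial : ℚ) := by
  induction k with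
  | zero => simp [rf_zero]
  | succ n ih =>
    rw [rf_succ, rf_succ, show 2*(n+1) = (2*n)+1+1 by ring, show 3*(n+1) = (3*n)+1+1+1 by ring,
      show 6*(n+1)+1 = (6*n)+1+1+1+1+1+1+1 by ring]
    push_cast [Nat.factorial_succ] at ih ⊢
    linear_combination (16*27*(2*(n:ℚ)+2)*(2*n+1)*(3*n+3)*(3*n+2)*(3*n+1)*(7/6+n)*(5/6+n)) * ih

/-- closed form of the hypergeometric term -/
noncomputable def T (k : ℕ) : ℚ :=
  ((4*k+1) * ((2*k).factorial:ℚ)^5 * ((3*k).factorial:ℚ)^2) /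
    (16^k * (k.factorial:ℚ)^10 * ((6*k+1).factorial:ℚ))

lemma term_eq (k : ℕ) :
    (risingFact (1 / 2) k * risingFact (5 / 4) k * risingFact (1 / 2) k *
          risingFact (1 / 2) k * risingFact (1 / 2) k * risingFact (1 / 3) k *
          risingFact (2 / 3) k) /
        (risingFact (1 / 4) k * risingFact 1 k * risingFact 1 k * risingFact 1 k *
          risingFact (7 / 6) k * risingFact (5 / 6) k * (Nat.factorial k : ℚ)) * 1 ^ k
      = T k := by
  have hk : (k.factorial : ℚ) ≠ 0 := Nat.cast_ne_zero.2 k.factorial_ne_zero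
  have h2k : ((2*k).factorial : ℚ) ≠ 0 := Nat.cast_ne_zero.2 (2*k).factorial_ne_zero
  have h3k : ((3*k).factorial : ℚ) ≠ 0 := Nat.cast_ne_zero.2 (3*k).factorial_ne_zero
  have h6k : ((6*k+1).factorial : ℚ) ≠ 0 := Nat.cast_ne_zero.2 (6*k+1).factorial_ne_zero
  have h4 : ((4:ℚ))^k ≠ 0 := by positivity
  have h16 : ((16:ℚ))^k ≠ 0 := by positivity
  have h27 : ((27:ℚ))^k ≠ 0 := by positivity
  have n14 : risingFact (1/4) k ≠ 0 := ne_of_gt (rf_pos (by norm_num) k)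
  have n13 : risingFact (1/3) k ≠ 0 := ne_of_gt (rf_pos (by norm_num) k)
  have n76 : risingFact (7/6) k ≠ 0 := ne_of_gt (rf_pos (by norm_num) k)
  have h41 : ((4:ℚ)*k+1) ≠ 0 := by positivity
  have e2 : risingFact (1/2) k = ((2*k).factorial : ℚ) / (4^k * k.factorial) := by
    rw [eq_div_iff (by positivity), ← rf_half]; ring
  have e23 : risingFact (2/3) k
      = ((3*k).factorial : ℚ) / (27^k * k.factorial * risingFact (1/3) k) := by
    rw [eq_div_iff (by positivity), ← rf_third]; ring
  have e56 : risingFact (5/6) k = ((6*k+1).factorial : ℚ) * k.factorial /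
      (16^k * 27^k * ((2*k).factorial:ℚ) * ((3*k).factorial:ℚ) * risingFact (7/6) k) := by
    rw [eq_div_iff (by positivity), ← rf_sixth]; ring
  rw [rf_one, rf_quarter, e2, e23, e56, T]
  field_simp
  rw [show ((16:ℚ))^k = 4^k * 4^k by rw [← mul_pow]; norm_num]
  ring

section NT
variable {p : ℕ} [hpf : Fact p.Prime]

lemma fact_ne_zmod {n : ℕ} (hn : n < p) : ((n.factorial : ZMod p)) ≠ 0 := by
  rw [Ne, ZMod.natCast_eq_zero_iff]
  intro h
  exact absurd (Nat.Prime.dvd_factorial hpf.1 |>.mp h) (by omega)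

lemma wilson_pair {x y : ℕ} (h : x + y + 1 = p) :
    ((x.factorial : ZMod p)) * (y.factorial : ZMod p) = (-1)^(y+1) := by
  induction y generalizing x with
  | zero =>
    have hx : x = p - 1 := by omega
    subst hx
    simp [ZMod.wilsons_lemma p]
  | succ n ih =>
    have ihx := ih (x := x+1) (by omega)
    have hc : ((x:ZMod p) + 1) = -((n:ZMod p)+1) := by
      have h0 : ((x + 1 + (n+1) : ℕ) : ZMod p) = 0 := by
        rw [show x + 1 + (n+1) = p by omega, ZMod.natCast_self]
      push_cast at h0
      linear_combination h0
    push_cast [Nat.factorial_succ] at ihx ⊢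
    linear_combination ((x.factorial : ZMod p) * n.factorial) * hc - ihx

lemma fact_padd {d : ℕ} (hd : d < p) :
    ∃ q : ℕ, (p + d).factorial = p * q ∧ ((q : ZMod p)) = -(d.factorial : ZMod p) := by
  induction d with
  | zero =>
    refine ⟨(p-1).factorial, ?_, ?_⟩
    · conv_lhs => rw [Nat.add_zero, show p = (p-1)+1 from (Nat.succ_pred_eq_of_pos hpf.1.pos).symm,
        Nat.factorial_succ]
      rw [show p - 1 + 1 = p by omega]
    · simp [ZMod.wilsons_lemma p]
  | succ n ih =>
    obtain ⟨q, hq, hq2⟩ := ih (by omega)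
    refine ⟨(p+n+1) * q, ?_, ?_⟩
    · rw [show p + (n+1) = (p+n)+1 by omega, Nat.factorial_succ, hq]; ring
    · push_cast [Nat.factorial_succ] at hq2 ⊢
      simp only [ZMod.natCast_self, zero_add]
      rw [hq2]; ring

lemma fact_decomp {n : ℕ} (hn : n < p*p) :
    ∃ q : ℕ, n.factorial = p ^ (n / p) * q ∧ ¬ p ∣ q := by
  induction n with
  | zero => exact ⟨1, by simp, by simpa using hpf.1.one_lt.ne'⟩
  | succ n ih =>
    obtain ⟨q, hq, hq2⟩ := ih (by omega)
    rw [Nat.succ_div]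
    by_cases hdvd : p ∣ (n+1)
    · obtain ⟨t, ht⟩ := hdvd
      have htp : t < p := by nlinarith [hpf.1.two_le]
      have ht0 : 0 < t := by nlinarith [hpf.1.two_le]
      refine ⟨t * q, ?_, ?_⟩
      · rw [if_pos ⟨t, ht⟩, Nat.factorial_succ, hq, ht, pow_add]
        ring
      · rintro hdq
        rcases (Nat.Prime.dvd_mul hpf.1).mp hdq with h | h
        · exact absurd (Nat.le_of_dvd ht0 h) (by omega)
        · exact hq2 h
    · refine ⟨(n+1) * q, ?_, ?_⟩
      · rw [if_neg hdvd, Nat.factorial_succ, hq]; ring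
      · rintro hdq
        rcases (Nat.Prime.dvd_mul hpf.1).mp hdq with h | h
        · exact hdvd h
        · exact hq2 h

/-- doubling identity : `4^k k! (m+k)! ≡ m! (2k)!  [ZMod p]` when `p = 2m+1`. -/
lemma doubling {m : ℕ} (hm : p = 2*m+1) (k : ℕ) :
    ((4:ZMod p))^k * (k.factorial : ZMod p) * ((m+k).factorial : ZMod p)
      = (m.factorial : ZMod p) * ((2*k).factorial : ZMod p) := by
  induction k with
  | zero => simp
  | succ n ih =>
    have hc : (2:ZMod p) * ((m:ZMod p) + n + 1) = 2*n+1 := by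
      have h0 : ((2*m+1 : ℕ) : ZMod p) = 0 := by rw [← hm, ZMod.natCast_self]
      push_cast at h0
      linear_combination h0
    rw [show m + (n+1) = (m+n)+1 by omega, show 2*(n+1) = (2*n)+1+1 by omega]
    push_cast [Nat.factorial_succ] at ih ⊢
    calc (4:ZMod p)^(n+1) * ((n+1) * n.factorial) * (((m:ZMod p)+n+1) * (m+n).factorial)
        = (4^n * n.factorial * ((m+n).factorial)) * ((n+1) * (2 * ((m:ZMod p)+n+1)) * 2) := by
          ring
      _ = (m.factorial * (2*n).factorial) * ((n+1) * (2*(n:ZMod p)+1) * 2) := by rw [ih, hc]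
      _ = (m.factorial:ZMod p) * ((2*(n:ZMod p)+1+1) * ((2*n+1) * (2*n).factorial)) := by ring

lemma four_pow_card_sub_one {m : ℕ} (hm : p = 2*m+1) (hp5 : 5 < p) :
    ((4:ZMod p))^(2*m) = 1 := by
  have h4 : (4:ZMod p) ≠ 0 := by
    have : ((4:ℕ) : ZMod p) ≠ 0 := by
      rw [Ne, ZMod.natCast_eq_zero_iff]
      intro h
      exact absurd (Nat.le_of_dvd (by norm_num) h) (by omega)
    simpa using this
  have := ZMod.pow_card_sub_one_eq_one h4
  rwa [show p-1 = 2*m by omega] at this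


/-- main helper: rationals of the form `x / y` with `p ∤ y` have norm ≤ 1. -/
lemma norm_div_le_one {p : ℕ} [hpf : Fact p.Prime] (x y : ℕ) (hy : ¬ p ∣ y) :
    padicNorm p ((x : ℚ) / (y : ℚ)) ≤ 1 := by
  rw [padicNorm.div]
  rw [← padicNorm.nat_eq_one_iff (p := p)] at hy
  rw [hy]
  simpa using padicNorm.of_nat (p := p) x

lemma not_dvd_sixteen (hp5 : 5 < p) : ¬ p ∣ 16 := by
  intro h
  rw [show (16:ℕ) = 2^4 by norm_num] at h
  have := Nat.le_of_dvd (by norm_num) (hpf.1.dvd_of_dvd_pow h)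
  omega

lemma good_norm (hp5 : 5 < p) {k : ℕ} (hk : k < p)
    (hv : (6*k+1)/p ≤ 5*((2*k)/p) + 2*((3*k)/p)) : padicNorm p (T k) ≤ 1 := by
  have hp2 : 2 ≤ p := hpf.1.two_le
  obtain ⟨qa, ha, hqa⟩ := fact_decomp (p := p) (n := 2*k) (by nlinarith)
  obtain ⟨qb, hb, hqb⟩ := fact_decomp (p := p) (n := 3*k) (by nlinarith)
  obtain ⟨qc, hc, hqc⟩ := fact_decomp (p := p) (n := 6*k+1) (by nlinarith)
  set a := (2*k)/p with hadef
  set b := (3*k)/p with hbdef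
  set c := (6*k+1)/p with hcdef
  have hkf : ¬ p ∣ k.factorial := fun h => absurd (hpf.1.dvd_factorial.mp h) (by omega)
  have hqa0 : 0 < qa := by
    rcases Nat.eq_zero_or_pos qa with h | h
    · exfalso; have := (2*k).factorial_pos; rw [ha, h, mul_zero] at this; omega
    · exact h
  have hqb0 : 0 < qb := by
    rcases Nat.eq_zero_or_pos qb with h | h
    · exfalso; have := (3*k).factorial_pos; rw [hb, h, mul_zero] at this; omega
    · exact h
  have hqc0 : 0 < qc := by
    rcases Nat.eq_zero_or_pos qc with h | h
    · exfalso; have := (6*k+1).factorial_pos; rw [hc, h, mul_zero] at this; omega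
    · exact h
  have hT : T k = ((((4*k+1) * qa^5 * qb^2 * p^(5*a+2*b-c)) : ℕ) : ℚ) /
      (((16^k * k.factorial^10 * qc : ℕ)) : ℚ) := by
    rw [T, ha, hb, hc]
    have hexp : (p:ℚ)^(a*5+b*2-c) * (p:ℚ)^c = (p:ℚ)^(a*5) * (p:ℚ)^(b*2) := by
      rw [← pow_add, ← pow_add]
      congr 1
      omega
    have d1 : ((16:ℚ))^k * (k.factorial:ℚ)^10 * (((p:ℚ)^c * qc)) ≠ 0 := by positivity
    have d2 : ((16^k * k.factorial^10 * qc : ℕ) : ℚ) ≠ 0 := by positivity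
    push_cast at d2 ⊢
    rw [div_eq_div_iff d1 d2]
    have he : (5*a+2*b-c) = (a*5+b*2-c) := by omega
    rw [he]
    linear_combination (-(4*(k:ℚ)+1) * qa^5 * qb^2 * 16^k * (k.factorial:ℚ)^10 * qc) * hexp
  rw [hT]
  apply norm_div_le_one
  intro h
  rcases (Nat.Prime.dvd_mul hpf.1).mp h with h | h
  · rcases (Nat.Prime.dvd_mul hpf.1).mp h with h | h
    · exact not_dvd_sixteen hp5 (hpf.1.dvd_of_dvd_pow h)
    · exact hkf (hpf.1.dvd_of_dvd_pow h)
  · exact hqc h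


lemma bad_pair (hp5 : 5 < p) {m k : ℕ} (hm : p = 2*m+1) (hk : k ≤ m)
    (hb1 : p ≤ 6*k+1) (hb2 : 3*k < p) :
    padicNorm p (T k + T (m-k)) ≤ 1 := by
  set j := m - k with hj
  set a := 3*k - m with ha
  have hjk : j + k = m := by omega
  have n1 : 6*k+1 = p + 2*a := by omega
  have n2 : 6*j+1 = p + (2*m-2*a) := by omega
  have n3 : 2*a < p := by omega
  have n4 : 2*m-2*a < p := by omega
  obtain ⟨Qk, hQk, hQkr⟩ := fact_padd (p := p) (d := 2*a) n3
  obtain ⟨Qj, hQj, hQjr⟩ := fact_padd (p := p) (d := 2*m-2*a) n4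
  have hpQk : ¬ p ∣ Qk := by
    intro h
    rw [← ZMod.natCast_eq_zero_iff] at h
    rw [h] at hQkr
    exact fact_ne_zmod (p := p) n3 (by linear_combination hQkr)
  have hpQj : ¬ p ∣ Qj := by
    intro h
    rw [← ZMod.natCast_eq_zero_iff] at h
    rw [h] at hQjr
    exact fact_ne_zmod (p := p) n4 (by linear_combination hQjr)
  -- the integer numerator
  set W : ℕ := (4*k+1) * (2*k).factorial^5 * (3*k).factorial^2 * (16^j * j.factorial^10 * Qj)
       + (4*j+1) * (2*j).factorial^5 * (3*j).factorial^2 * (16^k * k.factorial^10 * Qk) with hW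
  set V : ℕ := (16^k * k.factorial^10 * Qk) * (16^j * j.factorial^10 * Qj) with hV
  have hQk0 : 0 < Qk := by
    rcases Nat.eq_zero_or_pos Qk with h | h
    · exfalso; have := (p+2*a).factorial_pos; rw [hQk, h, mul_zero] at this; omega
    · exact h
  have hQj0 : 0 < Qj := by
    rcases Nat.eq_zero_or_pos Qj with h | h
    · exfalso; have := (p+(2*m-2*a)).factorial_pos; rw [hQj, h, mul_zero] at this; omega
    · exact h
  have hfk : ((6*k+1).factorial : ℚ) = p * Qk := by rw [n1, hQk]; push_cast; ring
  have hfj : ((6*j+1).factorial : ℚ) = p * Qj := by rw [n2, hQj]; push_cast; ring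
  have hp0 : (p:ℚ) ≠ 0 := Nat.cast_ne_zero.2 (by omega)
  have hsum : T k + T j = (W:ℚ) / ((p:ℚ) * V) := by
    rw [T, T, hfk, hfj, hW, hV]
    have d1 : ((16:ℚ))^k * (k.factorial:ℚ)^10 * ((p:ℚ) * Qk) ≠ 0 := by positivity
    have d2 : ((16:ℚ))^j * (j.factorial:ℚ)^10 * ((p:ℚ) * Qj) ≠ 0 := by positivity
    push_cast
    field_simp
  -- ZMod computation
  haveI : NeZero p := ⟨by omega⟩
  have E1 : ((4:ZMod p))^k * (k.factorial : ZMod p) * ((m+k).factorial : ZMod p)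
      = (m.factorial : ZMod p) * ((2*k).factorial : ZMod p) := doubling hm k
  have E2 : ((4:ZMod p))^a * (a.factorial : ZMod p) * ((3*k).factorial : ZMod p)
      = (m.factorial : ZMod p) * ((2*a).factorial : ZMod p) := by
    have := doubling (p := p) hm a
    rwa [show m + a = 3*k by omega] at this
  have E1_10 : (((4:ZMod p))^k * (k.factorial : ZMod p) * ((m+k).factorial : ZMod p))^10
      = ((m.factorial : ZMod p) * ((2*k).factorial : ZMod p))^10 := by rw [E1]
  have W1_5 : (((2*j).factorial : ZMod p) * ((2*k).factorial : ZMod p))^5 = -1 := by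
    rw [wilson_pair (x := 2*j) (y := 2*k) (by omega), ← pow_mul,
      show (2*k+1)*5 = 2*(5*k+2)+1 by ring, pow_succ, pow_mul]
    norm_num
  have W2sq : (((3*j).factorial : ZMod p) * (a.factorial : ZMod p))^2 = 1 := by
    rw [wilson_pair (x := 3*j) (y := a) (by omega), ← pow_mul, mul_comm (a+1) 2, pow_mul]
    norm_num
  have W3_10 : ((j.factorial : ZMod p) * ((m+k).factorial : ZMod p))^10 = 1 := by
    rw [wilson_pair (x := j) (y := m+k) (by omega), ← pow_mul, mul_comm (m+k+1) 10, pow_mul]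
    norm_num
  have W4 : (((2*m-2*a).factorial : ZMod p) * ((2*a).factorial : ZMod p)) = -1 := by
    rw [wilson_pair (x := 2*m-2*a) (y := 2*a) (by omega), pow_succ, pow_mul]
    norm_num
  have M8 : ((m.factorial : ZMod p))^8 = 1 := by
    have hw := wilson_pair (p := p) (x := m) (y := m) (by omega)
    calc ((m.factorial : ZMod p))^8 = ((m.factorial : ZMod p) * m.factorial)^4 := by ring
      _ = ((-1 : ZMod p)^(m+1))^4 := by rw [hw]
      _ = 1 := by rw [← pow_mul, mul_comm (m+1) 4, pow_mul]; norm_num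
  have H4 : (4*(j:ZMod p)+1) = -(4*(k:ZMod p)+1) := by
    have h0 : ((4*j+1+(4*k+1) : ℕ) : ZMod p) = 0 := by
      rw [show 4*j+1+(4*k+1) = 2*p by omega]
      push_cast [ZMod.natCast_self]
      ring
    push_cast at h0
    linear_combination h0
  have hpow : (16:ZMod p)^j * (4:ZMod p)^(10*k) = (16:ZMod p)^k * (4:ZMod p)^(2*a) := by
    have h16 : (16:ZMod p) = 4^2 := by norm_num
    rw [h16, ← pow_mul, ← pow_mul, ← pow_add, ← pow_add,
      show 2*j+10*k = (2*k+2*a) + (2*m)*2 by omega, pow_add, pow_mul, four_pow_card_sub_one hm hp5]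
    norm_num
  have h4z : (4:ZMod p) ≠ 0 := by
    have : ((4:ℕ) : ZMod p) ≠ 0 := by
      rw [Ne, ZMod.natCast_eq_zero_iff]
      intro h
      exact absurd (Nat.le_of_dvd (by norm_num) h) (by omega)
    simpa using this
  -- abbreviations
  set F2k := ((2*k).factorial : ZMod p) with hF2k
  set F3k := ((3*k).factorial : ZMod p) with hF3k
  set Fk := ((k.factorial : ZMod p)) with hFk
  set F2j := ((2*j).factorial : ZMod p) with hF2j
  set F3j := ((3*j).factorial : ZMod p) with hF3j
  set Fj := ((j.factorial : ZMod p)) with hFj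
  set Fa := ((a.factorial : ZMod p)) with hFa
  set F2a := (((2*a).factorial : ZMod p)) with hF2a
  set Fw := (((2*m-2*a).factorial : ZMod p)) with hFw
  set Fm := ((m.factorial : ZMod p)) with hFm
  set Fmk := (((m+k).factorial : ZMod p)) with hFmk
  set c : ZMod p := (4:ZMod p)^(10*k) * (4:ZMod p)^(2*a) * F2k^5 * Fa^2 * F2a * Fmk^10 with hcdef
  have hc : c ≠ 0 := by
    apply mul_ne_zero
    apply mul_ne_zero
    apply mul_ne_zero
    apply mul_ne_zero
    apply mul_ne_zero
    · exact pow_ne_zero _ h4z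
    · exact pow_ne_zero _ h4z
    · exact pow_ne_zero _ (fact_ne_zmod (p := p) (by omega))
    · exact pow_ne_zero _ (fact_ne_zmod (p := p) (by omega))
    · exact fact_ne_zmod (p := p) (by omega)
    · exact pow_ne_zero _ (fact_ne_zmod (p := p) (by omega))
  set Z : ZMod p := (4*(k:ZMod p)+1) * (16:ZMod p)^j * (4:ZMod p)^(10*k) * F2k^10 * Fm^2 * F2a^2
    with hZdef
  set X : ZMod p := (4*(k:ZMod p)+1) * F2k^5 * F3k^2 * ((16:ZMod p)^j * Fj^10 * (-Fw)) with hXdef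
  set Y : ZMod p := (4*(j:ZMod p)+1) * F2j^5 * F3j^2 * ((16:ZMod p)^k * Fk^10 * (-F2a)) with hYdef
  have cX : c * X = Z := by
    linear_combination
      (-((4*(k:ZMod p)+1) * (4:ZMod p)^(10*k) * F2k^10 * (16:ZMod p)^j *
          ((4:ZMod p)^a * Fa * F3k)^2 * (Fj*Fmk)^10)) * W4 +
      ((4*(k:ZMod p)+1) * (4:ZMod p)^(10*k) * F2k^10 * (16:ZMod p)^j *
          ((4:ZMod p)^a * Fa * F3k)^2) * W3_10 +
      ((4*(k:ZMod p)+1) * (4:ZMod p)^(10*k) * F2k^10 * (16:ZMod p)^j *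
          ((4:ZMod p)^a * Fa * F3k + Fm * F2a)) * E2
  have cY : c * Y = -Z := by
    linear_combination
      (-((F2j*F2k)^5 * (F3j*Fa)^2 * ((4:ZMod p)^k*Fk*Fmk)^10 * (16:ZMod p)^k *
          (4:ZMod p)^(2*a) * F2a^2)) * H4 +
      ((4*(k:ZMod p)+1) * (F3j*Fa)^2 * ((4:ZMod p)^k*Fk*Fmk)^10 * (16:ZMod p)^k *
          (4:ZMod p)^(2*a) * F2a^2) * W1_5 +
      (-((4*(k:ZMod p)+1) * ((4:ZMod p)^k*Fk*Fmk)^10 * (16:ZMod p)^k *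
          (4:ZMod p)^(2*a) * F2a^2)) * W2sq +
      (-((4*(k:ZMod p)+1) * (16:ZMod p)^k * (4:ZMod p)^(2*a) * F2a^2)) * E1_10 +
      (-((4*(k:ZMod p)+1) * F2k^10 * Fm^2 * (16:ZMod p)^k * (4:ZMod p)^(2*a) * F2a^2)) * M8 +
      ((4*(k:ZMod p)+1) * Fm^2 * F2k^10 * F2a^2) * hpow
  have hXY : X + Y = 0 := by
    rcases mul_eq_zero.mp (show c * (X+Y) = 0 by linear_combination cX + cY) with h|h
    · exact absurd h hc
    · exact h
  have Wz : (W : ZMod p) = 0 := by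
    rw [hW]
    push_cast
    simp only [hQkr, hQjr, ← hF2k, ← hF3k, ← hFk, ← hF2j, ← hF3j, ← hFj, ← hF2a, ← hFw]
    linear_combination hXY
  obtain ⟨W', hW'⟩ := (ZMod.natCast_eq_zero_iff W p).mp Wz
  have hsum2 : T k + T j = (W' : ℚ)/(V : ℚ) := by
    rw [hsum, hW']
    push_cast
    rw [mul_div_mul_left _ _ hp0]
  rw [hsum2]
  apply norm_div_le_one
  rw [hV]
  intro h
  rcases (Nat.Prime.dvd_mul hpf.1).mp h with h | h
  · rcases (Nat.Prime.dvd_mul hpf.1).mp h with h | h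
    · rcases (Nat.Prime.dvd_mul hpf.1).mp h with h | h
      · exact not_dvd_sixteen (p := p) hp5 (hpf.1.dvd_of_dvd_pow h)
      · exact absurd (hpf.1.dvd_factorial.mp (hpf.1.dvd_of_dvd_pow h)) (by omega)
    · exact hpQk h
  · rcases (Nat.Prime.dvd_mul hpf.1).mp h with h | h
    · rcases (Nat.Prime.dvd_mul hpf.1).mp h with h | h
      · exact not_dvd_sixteen (p := p) hp5 (hpf.1.dvd_of_dvd_pow h)
      · exact absurd (hpf.1.dvd_factorial.mp (hpf.1.dvd_of_dvd_pow h)) (by omega)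
    · exact hpQj h


end NT

theorem main_norm (p : ℕ) (hp : p.Prime) (hp5 : 5 < p) :
    padicNorm p (∑ k ∈ Finset.range p, T k) ≤ 1 := by
  haveI hpf : Fact p.Prime := ⟨hp⟩
  have hodd : p % 2 = 1 := by
    rcases Nat.mod_two_eq_zero_or_one p with h | h
    · exfalso
      rcases (hp.eq_one_or_self_of_dvd 2 (Nat.dvd_of_mod_eq_zero h)) with h2 | h2 <;> omega
    · exact h
  set m := p / 2 with hmdef
  have hm : p = 2*m+1 := by omega
  have hgood_hv : ∀ k : ℕ, k ≤ m → ¬(p ≤ 6*k+1 ∧ 3*k < p) →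
      (6*k+1)/p ≤ 5*((2*k)/p) + 2*((3*k)/p) := by
    intro k hk hng
    by_cases h1 : 6*k+1 < p
    · rw [Nat.div_eq_of_lt h1]; omega
    · have h3 : p ≤ 3*k := by omega
      have hge : 1 ≤ (3*k)/p := (Nat.one_le_div_iff (by omega)).mpr h3
      have hlt : (6*k+1)/p < 3 := Nat.div_lt_of_lt_mul (by omega)
      omega
  have hpair : ∀ k : ℕ, k ≤ m → padicNorm p (T k + T (m-k)) ≤ 1 := by
    intro k hk
    by_cases hbad : p ≤ 6*k+1 ∧ 3*k < p
    · exact bad_pair hp5 hm hk hbad.1 hbad.2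
    · refine le_trans padicNorm.nonarchimedean (max_le ?_ ?_)
      · exact good_norm hp5 (by omega) (hgood_hv k hk hbad)
      · refine good_norm hp5 (by omega) (hgood_hv (m-k) (by omega) ?_)
        intro ⟨hc1, hc2⟩
        exact hbad (by constructor <;> omega)
  have hsplit : ∑ k ∈ Finset.range p, T k
      = (∑ k ∈ Finset.range (m+1), T k) + ∑ k ∈ Finset.Ico (m+1) p, T k := by
    rw [Finset.range_eq_Ico, ← Finset.sum_Ico_consecutive _ (Nat.zero_le _) (by omega : m+1 ≤ p),
      ← Finset.range_eq_Ico]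
  rw [hsplit]
  refine le_trans padicNorm.nonarchimedean (max_le ?_ ?_)
  · -- left part
    set L := ∑ k ∈ Finset.range (m+1), T k with hL
    have h2L : (2:ℚ) * L = ∑ k ∈ Finset.range (m+1), (T k + T (m-k)) := by
      rw [Finset.sum_add_distrib]
      have hrefl : ∑ k ∈ Finset.range (m+1), T (m-k) = L := by
        have h' := Finset.sum_range_reflect T (m+1)
        simp only [Nat.add_sub_cancel] at h'
        exact h'
      rw [hrefl, hL]
      ring
    have hnorm2 : padicNorm p 2 = 1 := by
      rw [show (2:ℚ) = ((2:ℕ):ℚ) by norm_num, padicNorm.nat_eq_one_iff]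
      intro h
      have := Nat.le_of_dvd (by norm_num) h
      omega
    have : padicNorm p L = padicNorm p ((2:ℚ) * L) := by
      rw [padicNorm.mul, hnorm2, one_mul]
    rw [this, h2L]
    exact padicNorm.sum_le' (fun k hk => hpair k (by
      simp only [Finset.mem_range] at hk; omega)) (by norm_num)
  · refine padicNorm.sum_le' (fun k hk => ?_) (by norm_num)
    simp only [Finset.mem_Ico] at hk
    refine good_norm hp5 hk.2 ?_
    have h2 : p ≤ 2*k := by omega
    have hge : 1 ≤ (2*k)/p := (Nat.one_le_div_iff (by omega)).mpr h2
    have hlt : (6*k+1)/p < 6 := Nat.div_lt_of_lt_mul (by omega)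
    omega


/-- For every prime `p > 5`, the truncated hypergeometric series
`₇F₆[1/2, 5/4, 1/2, 1/2, 1/2, 1/3, 2/3; 1/4, 1, 1, 1, 7/6, 5/6; 1]_{p-1}`
is a `p`-adic integer, i.e. its `p`-adic valuation is nonnegative. -/
theorem sevenFsix_p_integral (p : ℕ) (hp : p.Prime) (hp5 : 5 < p) :
    0 ≤ padicValRat p (∑ k ∈ Finset.range p,
      (risingFact (1 / 2) k * risingFact (5 / 4) k * risingFact (1 / 2) k *
          risingFact (1 / 2) k * risingFact (1 / 2) k * risingFact (1 / 3) k *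
          risingFact (2 / 3) k) /
        (risingFact (1 / 4) k * risingFact 1 k * risingFact 1 k * risingFact 1 k *
          risingFact (7 / 6) k * risingFact (5 / 6) k * (Nat.factorial k : ℚ)) * 1 ^ k) := by
  haveI hpf : Fact p.Prime := ⟨hp⟩
  have hrw : (∑ k ∈ Finset.range p,
      (risingFact (1 / 2) k * risingFact (5 / 4) k * risingFact (1 / 2) k *
          risingFact (1 / 2) k * risingFact (1 / 2) k * risingFact (1 / 3) k *
          risingFact (2 / 3) k) /
        (risingFact (1 / 4) k * risingFact 1 k * risingFact 1 k * risingFact 1 k *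
          risingFact (7 / 6) k * risingFact (5 / 6) k * (Nat.factorial k : ℚ)) * 1 ^ k)
      = ∑ k ∈ Finset.range p, T k :=
    Finset.sum_congr rfl (fun k _ => term_eq k)
  rw [hrw]
  have h := main_norm p hp hp5
  set S := ∑ k ∈ Finset.range p, T k with hS
  by_cases h0 : S = 0
  · rw [h0]
    simp [padicValRat]
  · rw [padicNorm.eq_zpow_of_nonzero h0] at h
    have hp1 : (1:ℚ) < p := by
      have := hp.two_le
      exact_mod_cast by omega
    rw [show (1:ℚ) = (p:ℚ)^(0:ℤ) by norm_num] at h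
    have := (zpow_le_zpow_iff_right₀ hp1).mp h
    linarith
end

section
/- For every prime p > 5, −2p · ₆F₅[1/2, 1/2, 1/2, 1/2, 1/3, 2/3; 1, 1, 1, 1/6, 5/6; 1]_{p−1} ≡ p · ₆F₅[1/2, 1/2, 1/2, 1/2, 1/3, 2/3; 1, 1, 1, 7/6, 5/6; 1]_{p−1} (mod p); that is, the p-adic valuation of the difference −2p·Σ_{k=0}^{p−1} ((1/2)_k^4 (1/3)_k (2/3)_k)/((1)_k^3 (1/6)_k (5/6)_k · k!) − p·Σ_{k=0}^{p−1} ((1/2)_k^4 (1/3)_k (2/3)_k)/((1)_k^3 (7/6)_k (5/6)_k · k!) is at least 1. -/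
/-!
Since `(7/6)_k = (6k+1)(1/6)_k`, the left-hand side equals `-p ∑_{k<p} u_k` with
`u_k = A_k (12k+3)/(6k+1)`, where `A_k` is the coefficient of the first series; so it suffices that
`∑_{k<p} u_k` is `p`-integral. The ratio `u_{k+1}/u_k` is `num k / den k` with
`num k = (2k+1)^4 (3k+1)(3k+2)(4k+5)` and `den k = 4(k+1)^4 (6k+5)(6k+7)(4k+1)`, so the valuation
of `u_K` is governed by which of these linear factors equal `p` for some `k < K`. Writing
`m = (p-1)/2`, every `u_K` with `K > m` is divisible by `(2m+1)^4 = p^4`, while for `K ≤ m` the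
poles are simple and lie in `p/6 < K < p/3`. The reflection `k ↦ m - 1 - k`, which is
`k ↦ -k - 3/2` modulo `p`, exchanges the linear factors of `num` and `den` up to sign, so
`num (m-1-k) ≡ -den k`. By induction over the band `p/4 < K < p/3` this gives
`u_{m-K} ≡ -u_K` to first order, so the poles cancel in the pairs `u_K + u_{m-K}`.
-/

open Finset

namespace SixFfive

theorem risingFact_succ (a : ℚ) (k : ℕ) : risingFact a (k + 1) = risingFact a k * (a + k) :=
  prod_range_succ _ _

theorem risingFact_pos {a : ℚ} (ha : 0 < a) (k : ℕ) : 0 < risingFact a k :=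
  prod_pos fun _ _ => by positivity

theorem risingFact_seven_sixths (k : ℕ) :
    risingFact (7 / 6) k = (6 * k + 1) * risingFact (1 / 6) k := by
  induction k with
  | zero => simp [risingFact]
  | succ k ih =>
    rw [risingFact_succ, risingFact_succ, ih]
    push_cast
    ring

/-- The `k`-th coefficient of `₆F₅[1/2, 1/2, 1/2, 1/2, 1/3, 2/3; 1, 1, 1, b, 5/6; 1]`. -/
def coeff (b : ℚ) (k : ℕ) : ℚ :=
  (risingFact (1 / 2) k ^ 4 * risingFact (1 / 3) k * risingFact (2 / 3) k) /
    (risingFact 1 k ^ 3 * risingFact b k * risingFact (5 / 6) k * (Nat.factorial k : ℚ))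

def term (k : ℕ) : ℚ := coeff (1 / 6) k * (12 * k + 3) / (6 * k + 1)

theorem sub_eq_neg_mul_sum_term (c : ℚ) (n : ℕ) :
    -2 * c * ∑ k ∈ range n, coeff (1 / 6) k * 1 ^ k -
        c * ∑ k ∈ range n, coeff (7 / 6) k * 1 ^ k = -(c * ∑ k ∈ range n, term k) := by
  simp only [one_pow, mul_one, mul_sum, ← sum_sub_distrib, ← sum_neg_distrib]
  refine sum_congr rfl fun k _ => ?_
  have : (6 * k + 1 : ℚ) ≠ 0 := by positivity
  simp only [term, coeff, risingFact_seven_sixths]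
  field_simp
  ring

theorem coeff_pos {b : ℚ} (hb : 0 < b) (k : ℕ) : 0 < coeff b k := by
  have := risingFact_pos (show (0 : ℚ) < 1 / 2 by norm_num) k
  have := risingFact_pos (show (0 : ℚ) < 1 / 3 by norm_num) k
  have := risingFact_pos (show (0 : ℚ) < 2 / 3 by norm_num) k
  have := risingFact_pos one_pos k
  have := risingFact_pos hb k
  have := risingFact_pos (show (0 : ℚ) < 5 / 6 by norm_num) k
  unfold coeff
  positivity

theorem term_pos (k : ℕ) : 0 < term k := by
  have := coeff_pos (show (0 : ℚ) < 1 / 6 by norm_num) k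
  unfold term
  positivity

theorem term_zero : term 0 = 3 := by
  simp [term, coeff, risingFact]

def numCore (k : ℕ) : ℕ := (2 * k + 1) ^ 4 * (3 * k + 1) * (3 * k + 2)

def denCore (k : ℕ) : ℕ := 4 * (k + 1) ^ 4 * (6 * k + 5) * (6 * k + 7)

def num (k : ℕ) : ℕ := numCore k * (4 * k + 5)

def den (k : ℕ) : ℕ := denCore k * (4 * k + 1)

theorem numCore_pos (k : ℕ) : 0 < numCore k := by
  unfold numCore
  positivity

theorem denCore_pos (k : ℕ) : 0 < denCore k := by
  unfold denCore
  positivity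

theorem num_pos (k : ℕ) : 0 < num k := Nat.mul_pos (numCore_pos k) (by omega)

theorem den_pos (k : ℕ) : 0 < den k := Nat.mul_pos (denCore_pos k) (by omega)

theorem term_succ (k : ℕ) : term (k + 1) = term k * num k / den k := by
  have := (risingFact_pos (show (0 : ℚ) < 1 / 2 by norm_num) k).ne'
  have := (risingFact_pos (show (0 : ℚ) < 1 / 3 by norm_num) k).ne'
  have := (risingFact_pos (show (0 : ℚ) < 2 / 3 by norm_num) k).ne'
  have := (risingFact_pos one_pos k).ne'
  have := (risingFact_pos (show (0 : ℚ) < 1 / 6 by norm_num) k).ne'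
  have := (risingFact_pos (show (0 : ℚ) < 5 / 6 by norm_num) k).ne'
  have : (Nat.factorial k : ℚ) ≠ 0 := by positivity
  have : (6 * k + 1 : ℚ) ≠ 0 := by positivity
  have : (6 * k + 7 : ℚ) ≠ 0 := by positivity
  have : (4 * k + 1 : ℚ) ≠ 0 := by positivity
  simp only [term, coeff, num, numCore, den, denCore, risingFact_succ, Nat.factorial_succ]
  push_cast
  field_simp
  ring

section Reflection

variable {p : ℕ} [Fact p.Prime]

theorem four_ne_zero_of_odd (hp : p % 2 = 1) : (4 : ZMod p) ≠ 0 := by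
  have : ¬ p ∣ 4 := fun h => by
    have := (Nat.prime_dvd_prime_iff_eq Fact.out Nat.prime_two).mp
      ((Fact.out : p.Prime).dvd_of_dvd_pow (show p ∣ 2 ^ 2 from h))
    omega
  exact_mod_cast (ZMod.natCast_eq_zero_iff 4 p).not.mpr this

/- Under `2x + 2k + 3 ≡ 0 (mod p)` the linear factors of `numCore x` become, up to sign and a
factor 2, those of `denCore k`: `2x + 1 ≡ -2(k + 1)`, `2(3x + 1) ≡ -(6k + 7)` and
`2(3x + 2) ≡ -(6k + 5)`. -/
theorem numCore_eq_denCore {x k : ℕ} (h : 2 * x + 2 * k + 3 = p) :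
    (numCore x : ZMod p) = denCore k := by
  have h0 : ((2 * x + 2 * k + 3 : ℕ) : ZMod p) = 0 := by rw [h]; exact ZMod.natCast_self p
  push_cast at h0
  refine mul_left_cancel₀ (four_ne_zero_of_odd (p := p) (by omega)) ?_
  have e1 : (2 * x + 1 : ZMod p) = -2 * (k + 1) := by linear_combination h0
  have e2 : (2 * (3 * x + 1) : ZMod p) = -(6 * k + 7) := by linear_combination 3 * h0
  have e3 : (2 * (3 * x + 2) : ZMod p) = -(6 * k + 5) := by linear_combination 3 * h0
  calc (4 : ZMod p) * numCore x = (2 * x + 1) ^ 4 * (2 * (3 * x + 1)) * (2 * (3 * x + 2)) := by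
        push_cast [numCore]
        ring
    _ = 4 * denCore k := by
        rw [e1, e2, e3]
        push_cast [denCore]
        ring

theorem num_eq_neg_den {x k : ℕ} (h : 2 * x + 2 * k + 3 = p) :
    (num x : ZMod p) = -den k := by
  have h0 : ((2 * x + 2 * k + 3 : ℕ) : ZMod p) = 0 := by rw [h]; exact ZMod.natCast_self p
  push_cast at h0
  have e : (4 * x + 5 : ZMod p) = -(4 * k + 1) := by linear_combination 2 * h0
  rw [num, den, Nat.cast_mul, Nat.cast_mul, numCore_eq_denCore h]
  push_cast
  rw [e]
  ring

end Reflection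

theorem eq_of_dvd_of_odd_of_lt {p n : ℕ} (hd : p ∣ n) (hodd : n % 2 = 1) (hlt : n < 3 * p) :
    n = p := by
  obtain ⟨t, rfl⟩ := hd
  have : t < 3 := lt_of_mul_lt_mul_left (by linarith) (Nat.zero_le p)
  interval_cases t <;> simp_all

theorem padicValNat_le_ite_dvd {p n : ℕ} (hn : n < p ^ 2) :
    padicValNat p n ≤ if p ∣ n then 1 else 0 := by
  split_ifs with h
  · rcases Nat.eq_zero_or_pos n with rfl | hn0
    · simp
    · exact (padicValNat_le_nat_log n).trans
        (Nat.lt_succ_iff.mp (Nat.log_lt_of_lt_pow hn0.ne' hn))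
  · simp [padicValNat.eq_zero_of_not_dvd h]

theorem count_mul_add_eq {a : ℕ} (ha : 0 < a) (b n K : ℕ) :
    Nat.count (fun k => a * k + b = n) K =
      if b ≤ n ∧ (n - b) % a = 0 ∧ (n - b) / a < K then 1 else 0 := by
  induction K with
  | zero => simp
  | succ K ih =>
    have key : a * K + b = n ↔ b ≤ n ∧ (n - b) % a = 0 ∧ (n - b) / a = K := by
      constructor
      · rintro rfl
        simp [Nat.mul_div_cancel_left _ ha]
      · rintro ⟨hb, hmod, hdiv⟩
        have := Nat.div_add_mod (n - b) a
        rw [hmod, hdiv] at this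
        omega
    rw [Nat.count_succ, ih]
    simp only [key]
    split_ifs <;> omega

theorem count_dvd_le_count_eq {p K : ℕ} {f : ℕ → ℕ}
    (hf : ∀ k < K, f k % 2 = 1 ∧ f k < 3 * p) :
    Nat.count (fun k => p ∣ f k) K ≤ Nat.count (fun k => f k = p) K :=
  Nat.count_mono_left fun k hk hd => eq_of_dvd_of_odd_of_lt hd (hf k hk).1 (hf k hk).2

theorem count_eq_le_count_dvd {p K : ℕ} {f : ℕ → ℕ} :
    Nat.count (fun k => f k = p) K ≤ Nat.count (fun k => p ∣ f k) K :=
  Nat.count_mono_left fun _ _ h => h ▸ dvd_refl p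

/-- Lower bound for the multiplicity of `p` in `∏_{k<K} num k`. -/
def numCount (p K : ℕ) : ℕ :=
  4 * Nat.count (fun k => p ∣ 2 * k + 1) K + Nat.count (fun k => p ∣ 3 * k + 1) K +
    Nat.count (fun k => p ∣ 3 * k + 2) K + Nat.count (fun k => p ∣ 4 * k + 5) K

/-- Upper bound for the multiplicity of `p` in `∏_{k<K} den k`, valid for `K < p`. -/
def denCount (p K : ℕ) : ℕ :=
  Nat.count (fun k => p ∣ 4 * k + 1) K + Nat.count (fun k => p ∣ 6 * k + 5) K +
    Nat.count (fun k => p ∣ 6 * k + 7) K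

theorem denCount_add_le {p K : ℕ} (hK : 2 * K < p) :
    denCount p K + (Nat.count (fun k => 3 * k + 1 = p) K + Nat.count (fun k => 3 * k + 2 = p) K +
        Nat.count (fun k => 4 * k + 5 = p) K) ≤
      numCount p K + (Nat.count (fun k => 4 * k + 1 = p) K + Nat.count (fun k => 6 * k + 5 = p) K +
        Nat.count (fun k => 6 * k + 7 = p) K) := by
  have d1 := count_dvd_le_count_eq (p := p) (f := fun k => 4 * k + 1) (K := K)
    fun k hk => ⟨by omega, by omega⟩
  have d2 := count_dvd_le_count_eq (p := p) (f := fun k => 6 * k + 5) (K := K)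
    fun k hk => ⟨by omega, by omega⟩
  have d3 := count_dvd_le_count_eq (p := p) (f := fun k => 6 * k + 7) (K := K)
    fun k hk => ⟨by omega, by omega⟩
  have n1 := count_eq_le_count_dvd (p := p) (f := fun k => 3 * k + 1) (K := K)
  have n2 := count_eq_le_count_dvd (p := p) (f := fun k => 3 * k + 2) (K := K)
  have n3 := count_eq_le_count_dvd (p := p) (f := fun k => 4 * k + 5) (K := K)
  unfold numCount denCount
  omega

section Padic

variable {p : ℕ} [hp : Fact p.Prime]

theorem odd_and_not_three_dvd (hp5 : 5 < p) : p % 2 = 1 ∧ p % 3 ≠ 0 := by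
  have h2 := hp.out.eq_one_or_self_of_dvd 2
  have h3 := hp.out.eq_one_or_self_of_dvd 3
  omega

theorem padicNorm_two (hp2 : p ≠ 2) : padicNorm p 2 = 1 := by
  have := (padicNorm.nat_eq_one_iff (p := p) 2).mpr fun h =>
    hp2 ((Nat.prime_dvd_prime_iff_eq hp.out Nat.prime_two).mp h)
  exact_mod_cast this

theorem padicNorm_intCast_le_of_cast_eq_zero {z : ℤ} (h : (z : ZMod p) = 0) :
    padicNorm p z ≤ p ^ (-1 : ℤ) := by
  have := (padicNorm.dvd_iff_norm_le (p := p) (n := 1) (z := z)).mp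
    (by simpa using (ZMod.intCast_zmod_eq_zero_iff_dvd z p).mp h)
  simpa using this

theorem ite_dvd_le_padicValNat {n : ℕ} (hn : n ≠ 0) :
    (if p ∣ n then 1 else 0) ≤ padicValNat p n := by
  split_ifs with h
  · exact one_le_padicValNat_of_dvd hn h
  · exact Nat.zero_le _

theorem ite_le_padicValNat_num (k : ℕ) :
    4 * (if p ∣ 2 * k + 1 then 1 else 0) + (if p ∣ 3 * k + 1 then 1 else 0) +
      (if p ∣ 3 * k + 2 then 1 else 0) + (if p ∣ 4 * k + 5 then 1 else 0) ≤
        padicValNat p (num k) := by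
  have h1 := ite_dvd_le_padicValNat (p := p) (n := 2 * k + 1) (by omega)
  have h2 := ite_dvd_le_padicValNat (p := p) (n := 3 * k + 1) (by omega)
  have h3 := ite_dvd_le_padicValNat (p := p) (n := 3 * k + 2) (by omega)
  have h4 := ite_dvd_le_padicValNat (p := p) (n := 4 * k + 5) (by omega)
  rw [num, numCore, padicValNat.mul, padicValNat.mul, padicValNat.mul, padicValNat.pow]
  · omega
  all_goals positivity

theorem padicValNat_den_le_ite (hp5 : 5 < p) {k : ℕ} (hk : k + 1 < p) :
    padicValNat p (den k) ≤
      (if p ∣ 4 * k + 1 then 1 else 0) + (if p ∣ 6 * k + 5 then 1 else 0) +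
        (if p ∣ 6 * k + 7 then 1 else 0) := by
  have hsq : 6 * k + 7 < p ^ 2 := by nlinarith
  have h1 := padicValNat_le_ite_dvd (p := p) (n := 4 * k + 1) (by omega)
  have h2 := padicValNat_le_ite_dvd (p := p) (n := 6 * k + 5) (by omega)
  have h3 := padicValNat_le_ite_dvd (p := p) (n := 6 * k + 7) hsq
  have h4 : padicValNat p 4 = 0 :=
    padicValNat.eq_zero_of_not_dvd (Nat.not_dvd_of_pos_of_lt (by norm_num) (by omega))
  have hk1 : padicValNat p (k + 1) = 0 :=
    padicValNat.eq_zero_of_not_dvd (Nat.not_dvd_of_pos_of_lt (by omega) hk)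
  rw [den, denCore, padicValNat.mul, padicValNat.mul, padicValNat.mul, padicValNat.mul,
    padicValNat.pow, h4, hk1]
  · omega
  all_goals positivity

theorem sub_le_padicValRat_term (hp5 : 5 < p) {K : ℕ} (hK : K < p) :
    (numCount p K : ℤ) - denCount p K ≤ padicValRat p (term K) := by
  induction K with
  | zero =>
    have : padicValRat p 3 = 0 := by
      have := padicValRat.of_nat (p := p) (n := 3)
      rw [padicValNat.eq_zero_of_not_dvd (Nat.not_dvd_of_pos_of_lt (by norm_num) (by omega))]
        at this
      exact_mod_cast this
    simp [numCount, denCount, term_zero, this]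
  | succ K ih =>
    have hnum := (Nat.cast_le (α := ℤ)).mpr (ite_le_padicValNat_num (p := p) K)
    have hden := (Nat.cast_le (α := ℤ)).mpr (padicValNat_den_le_ite hp5 hK)
    simp only [Nat.cast_add, Nat.cast_mul, Nat.cast_ite, Nat.cast_one, Nat.cast_zero,
      Nat.cast_ofNat] at hnum hden
    have hnum0 : (num K : ℚ) ≠ 0 := by exact_mod_cast (num_pos K).ne'
    have hden0 : (den K : ℚ) ≠ 0 := by exact_mod_cast (den_pos K).ne'
    rw [term_succ, padicValRat.div (mul_ne_zero (term_pos K).ne' hnum0) hden0,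
      padicValRat.mul (term_pos K).ne' hnum0, padicValRat.of_nat, padicValRat.of_nat]
    have := ih (by omega)
    simp only [numCount, denCount, Nat.count_succ, Nat.cast_add, Nat.cast_mul, Nat.cast_ite,
      Nat.cast_one, Nat.cast_zero, Nat.cast_ofNat] at this ⊢
    linarith

theorem padicNorm_term_le (hp5 : 5 < p) {K : ℕ} (hK : K < p) :
    padicNorm p (term K) ≤ p ^ ((denCount p K : ℤ) - numCount p K) := by
  rw [padicNorm.eq_zpow_of_nonzero (term_pos K).ne']
  exact zpow_le_zpow_right₀ (by exact_mod_cast hp.out.one_lt.le)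
    (by linarith [sub_le_padicValRat_term hp5 hK])

theorem padicNorm_term_le_one_of_count_le (hp5 : 5 < p) {K : ℕ} (hK : K < p)
    (h : denCount p K ≤ numCount p K) : padicNorm p (term K) ≤ 1 := by
  refine (padicNorm_term_le hp5 hK).trans ?_
  rw [← zpow_zero (p : ℚ)]
  exact zpow_le_zpow_right₀ (by exact_mod_cast hp.out.one_lt.le) (by omega)

theorem count_dvd_mul_add_le_one {a b K : ℕ} (ha : ¬ p ∣ a) (hK : K ≤ p) :
    Nat.count (fun k => p ∣ a * k + b) K ≤ 1 := by
  rw [Nat.count_eq_card_filter_range]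
  refine card_le_one.mpr fun i hi j hj => ?_
  simp only [mem_filter, mem_range] at hi hj
  have hi' := (ZMod.natCast_eq_zero_iff (a * i + b) p).mpr hi.2
  have hj' := (ZMod.natCast_eq_zero_iff (a * j + b) p).mpr hj.2
  push_cast at hi' hj'
  have hij : (i : ZMod p) = j :=
    mul_left_cancel₀ ((ZMod.natCast_eq_zero_iff a p).not.mpr ha) (by linear_combination hi' - hj')
  rwa [ZMod.natCast_eq_natCast_iff', Nat.mod_eq_of_lt (by omega), Nat.mod_eq_of_lt (by omega)]
    at hij

theorem padicNorm_term_le_one_of_lt_two_mul (hp5 : 5 < p) {K : ℕ} (h1 : p < 2 * K)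
    (h2 : K < p) : padicNorm p (term K) ≤ 1 := by
  refine padicNorm_term_le_one_of_count_le hp5 h2 ?_
  have := (odd_and_not_three_dvd hp5).1
  have hp4 : ¬ p ∣ 4 := Nat.not_dvd_of_pos_of_lt (by norm_num) (by omega)
  have hp6 : ¬ p ∣ 6 := Nat.not_dvd_of_pos_of_lt (by norm_num) (by omega)
  have d1 := count_dvd_mul_add_le_one (b := 1) hp4 h2.le
  have d2 := count_dvd_mul_add_le_one (b := 5) hp6 h2.le
  have d3 := count_dvd_mul_add_le_one (b := 7) hp6 h2.le
  have n1 := count_eq_le_count_dvd (p := p) (f := fun k => 2 * k + 1) (K := K)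
  rw [count_mul_add_eq (by norm_num)] at n1
  unfold numCount denCount
  split_ifs at n1 <;> omega

theorem padicNorm_term_le_of_two_mul_lt (hp5 : 5 < p) {K : ℕ} (hK : 2 * K < p) :
    padicNorm p (term K) ≤ p := by
  have h := denCount_add_le hK
  have := odd_and_not_three_dvd hp5
  simp only [count_mul_add_eq (show 0 < 3 by norm_num), count_mul_add_eq (show 0 < 4 by norm_num),
    count_mul_add_eq (show 0 < 6 by norm_num)] at h
  refine (padicNorm_term_le hp5 (by omega)).trans ?_
  conv_rhs => rw [← zpow_one (p : ℚ)]
  exact zpow_le_zpow_right₀ (by exact_mod_cast hp.out.one_lt.le) (by split_ifs at h <;> omega)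

/- For `2K < p` a pole of `term K` comes from `6k + 5 = p` or `6k + 7 = p` (at `k ≈ p/6`) and is
cancelled by `3k + 1 = p` or `3k + 2 = p` (at `k ≈ p/3`); if `p ≡ 1 (mod 4)` a second one, from
`4k + 1 = p`, is preceded by `4k + 5 = p` at the previous step. -/
theorem padicNorm_term_le_one_of_two_mul_lt (hp5 : 5 < p) {K : ℕ} (hK : 2 * K < p)
    (h : 6 * K + 2 ≤ p ∨ p ≤ 3 * K ∨ 4 * K + 1 = p) : padicNorm p (term K) ≤ 1 := by
  have hc := denCount_add_le hK
  have := odd_and_not_three_dvd hp5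
  simp only [count_mul_add_eq (show 0 < 3 by norm_num), count_mul_add_eq (show 0 < 4 by norm_num),
    count_mul_add_eq (show 0 < 6 by norm_num)] at hc
  exact padicNorm_term_le_one_of_count_le hp5 (by omega) (by split_ifs at hc <;> omega)

theorem not_dvd_numCore {k : ℕ} (h : 3 * k + 2 < p) : ¬ p ∣ numCore k := by
  have hp' := hp.out
  refine hp'.not_dvd_mul (hp'.not_dvd_mul (fun hd => ?_) ?_) ?_
  · exact Nat.not_dvd_of_pos_of_lt (by omega) (by omega) (hp'.dvd_of_dvd_pow hd)
  all_goals exact Nat.not_dvd_of_pos_of_lt (by omega) (by omega)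

theorem not_dvd_num {k : ℕ} (h1 : 3 * k + 2 < p) (h2 : 4 * k + 5 ≠ p) (h3 : 4 * k + 5 < 3 * p) :
    ¬ p ∣ num k :=
  hp.out.not_dvd_mul (not_dvd_numCore h1) fun hd => h2 (eq_of_dvd_of_odd_of_lt hd (by omega) h3)

theorem one_add_term_div_term_succ_le {x k : ℕ} (h : 2 * x + 2 * k + 3 = p)
    (hx : ¬ p ∣ num x) (hk : ¬ p ∣ num k)
    (ih : padicNorm p (1 + term (x + 1) / term k) ≤ p ^ (-1 : ℤ)) :
    padicNorm p (1 + term x / term (k + 1)) ≤ p ^ (-1 : ℤ) := by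
  have := (term_pos x).ne'
  have := (term_pos k).ne'
  have : (num x : ℚ) ≠ 0 := by exact_mod_cast (num_pos x).ne'
  have : (num k : ℚ) ≠ 0 := by exact_mod_cast (num_pos k).ne'
  have : (den x : ℚ) ≠ 0 := by exact_mod_cast (den_pos x).ne'
  have : (den k : ℚ) ≠ 0 := by exact_mod_cast (den_pos k).ne'
  have hcong : ((((num x * num k : ℕ) : ℤ) - (den x * den k : ℕ) : ℤ) : ZMod p) = 0 := by
    push_cast
    rw [num_eq_neg_den h, num_eq_neg_den (show 2 * k + 2 * x + 3 = p by omega)]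
    ring
  have key : 1 + term x / term (k + 1) =
      ((((num x * num k : ℕ) : ℤ) - (den x * den k : ℕ) : ℤ) +
        (den x * den k : ℕ) * (1 + term (x + 1) / term k)) / (num x * num k : ℕ) := by
    rw [term_succ, term_succ]
    push_cast
    field_simp
    ring
  rw [key, padicNorm.div, (padicNorm.nat_eq_one_iff _).mpr (hp.out.not_dvd_mul hx hk), div_one]
  refine padicNorm.nonarchimedean.trans (max_le (padicNorm_intCast_le_of_cast_eq_zero hcong) ?_)
  rw [padicNorm.mul]
  exact (mul_le_of_le_one_left (padicNorm.nonneg _) (padicNorm.of_nat _)).trans ih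

theorem one_add_term_div_term_succ_le_of_four_mul_add_three {q : ℕ} (h : 4 * q + 3 = p) :
    padicNorm p (1 + term q / term (q + 1)) ≤ p ^ (-1 : ℤ) := by
  have := (term_pos q).ne'
  have : (num q : ℚ) ≠ 0 := by exact_mod_cast (num_pos q).ne'
  have : (den q : ℚ) ≠ 0 := by exact_mod_cast (den_pos q).ne'
  have hcong : (((num q + den q : ℕ) : ℤ) : ZMod p) = 0 := by
    push_cast
    rw [num_eq_neg_den (show 2 * q + 2 * q + 3 = p by omega)]
    ring
  have key : 1 + term q / term (q + 1) = (((num q + den q : ℕ) : ℤ) : ℚ) / (num q : ℕ) := by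
    rw [term_succ]
    push_cast
    field_simp
  rw [key, padicNorm.div,
    (padicNorm.nat_eq_one_iff _).mpr (not_dvd_num (by omega) (by omega) (by omega)), div_one]
  exact padicNorm_intCast_le_of_cast_eq_zero hcong

theorem one_add_term_div_term_add_two_le_of_four_mul_add_five (hp5 : 5 < p) {r : ℕ}
    (h : 4 * r + 5 = p) : padicNorm p (1 + term r / term (r + 2)) ≤ p ^ (-1 : ℤ) := by
  have := (term_pos r).ne'
  have : (numCore r : ℚ) ≠ 0 := by exact_mod_cast (numCore_pos r).ne'
  have : (numCore (r + 1) : ℚ) ≠ 0 := by exact_mod_cast (numCore_pos (r + 1)).ne'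
  have : (denCore r : ℚ) ≠ 0 := by exact_mod_cast (denCore_pos r).ne'
  have : (denCore (r + 1) : ℚ) ≠ 0 := by exact_mod_cast (denCore_pos (r + 1)).ne'
  have : (4 * r + 1 : ℚ) ≠ 0 := by positivity
  have : (4 * r + 5 : ℚ) ≠ 0 := by positivity
  have : (4 * (r + 1) + 5 : ℚ) ≠ 0 := by positivity
  have hcong :
      (((numCore r * num (r + 1) + den r * denCore (r + 1) : ℕ) : ℤ) : ZMod p) = 0 := by
    push_cast
    rw [numCore_eq_denCore (show 2 * r + 2 * (r + 1) + 3 = p by omega),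
      num_eq_neg_den (show 2 * (r + 1) + 2 * r + 3 = p by omega)]
    ring
  -- the factor `4r + 5 = p` of `num r` cancels against `4(r + 1) + 1` in `den (r + 1)`
  have key : 1 + term r / term (r + 2) =
      (((numCore r * num (r + 1) + den r * denCore (r + 1) : ℕ) : ℤ) : ℚ) /
        (numCore r * num (r + 1) : ℕ) := by
    rw [term_succ, term_succ]
    simp only [num, den]
    push_cast
    field_simp
    ring
  have hnd : ¬ p ∣ numCore r * num (r + 1) :=
    hp.out.not_dvd_mul (not_dvd_numCore (by omega)) (not_dvd_num (by omega) (by omega) (by omega))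
  rw [key, padicNorm.div, (padicNorm.nat_eq_one_iff _).mpr hnd, div_one]
  exact padicNorm_intCast_le_of_cast_eq_zero hcong

theorem padicNorm_one_add_term_div_term_le (hp5 : 5 < p) {K : ℕ} (h1 : (p + 3) / 4 ≤ K)
    (h2 : 3 * K < p) : padicNorm p (1 + term ((p - 1) / 2 - K) / term K) ≤ p ^ (-1 : ℤ) := by
  have hodd := (odd_and_not_three_dvd hp5).1
  induction K, h1 using Nat.le_induction with
  | base =>
    rcases (by omega : p % 4 = 3 ∨ p % 4 = 1) with h4 | h4
    · rw [show (p - 1) / 2 - (p + 3) / 4 = (p - 3) / 4 by omega,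
        show (p + 3) / 4 = (p - 3) / 4 + 1 by omega]
      exact one_add_term_div_term_succ_le_of_four_mul_add_three (by omega)
    · rw [show (p - 1) / 2 - (p + 3) / 4 = (p - 5) / 4 by omega,
        show (p + 3) / 4 = (p - 5) / 4 + 2 by omega]
      exact one_add_term_div_term_add_two_le_of_four_mul_add_five hp5 (by omega)
  | succ K hK ih =>
    have ih' := ih (by omega)
    rw [show (p - 1) / 2 - K = (p - 1) / 2 - (K + 1) + 1 by omega] at ih'
    exact one_add_term_div_term_succ_le (by omega)
      (not_dvd_num (by omega) (by omega) (by omega))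
      (not_dvd_num (by omega) (by omega) (by omega)) ih'

theorem padicNorm_term_add_term_le_one (hp5 : 5 < p) {K : ℕ} (h1 : (p - 1) / 2 ≤ 2 * K)
    (h2 : K ≤ (p - 1) / 2) : padicNorm p (term ((p - 1) / 2 - K) + term K) ≤ 1 := by
  have hodd := (odd_and_not_three_dvd hp5).1
  by_cases hexit : p ≤ 3 * K
  · exact padicNorm.nonarchimedean.trans (max_le
      (padicNorm_term_le_one_of_two_mul_lt hp5 (by omega) (by omega))
      (padicNorm_term_le_one_of_two_mul_lt hp5 (by omega) (by omega)))
  by_cases hmid : 4 * K + 1 = p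
  · rw [show (p - 1) / 2 - K = K by omega, ← two_mul, padicNorm.mul, padicNorm_two (by omega),
      one_mul]
    exact padicNorm_term_le_one_of_two_mul_lt hp5 (by omega) (by omega)
  have := (term_pos K).ne'
  have hp0 : (p : ℚ) ≠ 0 := by exact_mod_cast hp.out.ne_zero
  rw [show term ((p - 1) / 2 - K) + term K = term K * (1 + term ((p - 1) / 2 - K) / term K) by
    field_simp; ring, padicNorm.mul]
  calc _ ≤ (p : ℚ) * p ^ (-1 : ℤ) :=
        mul_le_mul (padicNorm_term_le_of_two_mul_lt hp5 (by omega))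
          (padicNorm_one_add_term_div_term_le hp5 (by omega) (by omega)) (padicNorm.nonneg _)
          (by positivity)
    _ = 1 := by rw [zpow_neg_one, mul_inv_cancel₀ hp0]

theorem padicNorm_sum_term_le_one (hp5 : 5 < p) :
    padicNorm p (∑ k ∈ range p, term k) ≤ 1 := by
  have hodd := (odd_and_not_three_dvd hp5).1
  set m := (p - 1) / 2
  rw [← sum_range_add_sum_Ico _ (show m + 1 ≤ p by omega)]
  refine padicNorm.nonarchimedean.trans (max_le ?_ ?_)
  · have hpair : ∀ k ∈ range (m + 1), padicNorm p (term (m - k) + term k) ≤ 1 := by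
      intro k hk
      rw [mem_range] at hk
      rcases le_total m (2 * k) with h | h
      · exact padicNorm_term_add_term_le_one hp5 h (by omega)
      · have := padicNorm_term_add_term_le_one hp5 (K := m - k) (by omega) (by omega)
        rwa [Nat.sub_sub_self (by omega), add_comm] at this
    have hreflect : 2 * ∑ k ∈ range (m + 1), term k =
        ∑ k ∈ range (m + 1), (term (m - k) + term k) := by
      rw [sum_add_distrib, ← sum_range_reflect term (m + 1)]
      simp only [add_tsub_cancel_right]
      ring
    calc padicNorm p (∑ k ∈ range (m + 1), term k)
        = padicNorm p (2 * ∑ k ∈ range (m + 1), term k) := by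
          rw [padicNorm.mul, padicNorm_two (by omega), one_mul]
      _ ≤ 1 := hreflect ▸ padicNorm.sum_le' hpair zero_le_one
  · refine padicNorm.sum_le' (fun k hk => ?_) zero_le_one
    rw [mem_Ico] at hk
    exact padicNorm_term_le_one_of_lt_two_mul hp5 (by omega) hk.2

end Padic

end SixFfive

/-- For every prime `p > 5`,
`-2p · ₆F₅[1/2,1/2,1/2,1/2,1/3,2/3; 1,1,1,1/6,5/6; 1]_{p-1}
  ≡ p · ₆F₅[1/2,1/2,1/2,1/2,1/3,2/3; 1,1,1,7/6,5/6; 1]_{p-1} (mod p)`. -/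
theorem sixFfive_mod_p (p : ℕ) (hp : p.Prime) (hp5 : 5 < p) :
    padicNorm p
      ((-2 * (p : ℚ)) * (∑ k ∈ Finset.range p,
          (risingFact (1 / 2) k ^ 4 * risingFact (1 / 3) k * risingFact (2 / 3) k) /
            (risingFact 1 k ^ 3 * risingFact (1 / 6) k * risingFact (5 / 6) k *
              (Nat.factorial k : ℚ)) * 1 ^ k) -
        (p : ℚ) * (∑ k ∈ Finset.range p,
          (risingFact (1 / 2) k ^ 4 * risingFact (1 / 3) k * risingFact (2 / 3) k) /
            (risingFact 1 k ^ 3 * risingFact (7 / 6) k * risingFact (5 / 6) k *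
              (Nat.factorial k : ℚ)) * 1 ^ k)) ≤ (p : ℚ) ^ (-1 : ℤ) := by
  have := Fact.mk hp
  change padicNorm p (-2 * (p : ℚ) * ∑ k ∈ range p, SixFfive.coeff (1 / 6) k * 1 ^ k -
    p * ∑ k ∈ range p, SixFfive.coeff (7 / 6) k * 1 ^ k) ≤ _
  rw [SixFfive.sub_eq_neg_mul_sum_term, padicNorm.neg, padicNorm.mul,
    padicNorm.padicNorm_p hp.one_lt, zpow_neg_one]
  exact mul_le_of_le_one_right (by positivity) (SixFfive.padicNorm_sum_term_le_one hp5)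
end
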